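/- arXiv:math/0411260 — 4 statements merged into one kernel-verified Lean document; each statement's English description precedes it below -/
import Mathlib

section
/- Let 𝓕 be a finite family of nonempty subsets of [r] with [r] ∈ 𝓕. Then the affine hull of Δ_𝓕 has dimension r − 1, and for every nonempty proper subset G ⊊ [r], the face {x ∈ Δ_𝓕 : Σ_{i∈G} x_i = |{F ∈ 𝓕 : F ⊆ G}|} of Δ_𝓕 has affine-hull dimension r − 2 (i.e., is a facet) if and only if G belongs to the building closure 𝓕̂ of 𝓕. -/
open Finset Pointwise

/-- The 0/1 indicator vector (in `ℝ^n`) of a finite set of coordinates. -/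
def indVec {n : ℕ} (S : Finset (Fin n)) : Fin n → ℝ := fun i => if i ∈ S then 1 else 0

/-- Independence with respect to a family `𝔅` of bases: being contained in a basis. -/
def FamIndep {n : ℕ} (𝔅 : Finset (Finset (Fin n))) (I : Finset (Fin n)) : Prop :=
  ∃ B ∈ 𝔅, I ⊆ B

/-- Circuits of the family `𝔅`: minimal dependent sets. -/
def FamCircuit {n : ℕ} (𝔅 : Finset (Finset (Fin n))) (C : Finset (Fin n)) : Prop :=
  ¬ FamIndep 𝔅 C ∧ ∀ D ⊂ C, FamIndep 𝔅 D

open scoped Classical in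
/-- The rank of a set: maximal cardinality of an independent subset. -/
noncomputable def famRk {n : ℕ} (𝔅 : Finset (Finset (Fin n))) (F : Finset (Fin n)) : ℕ :=
  (F.powerset.filter (fun I => FamIndep 𝔅 I)).sup Finset.card

open scoped Classical in
/-- The bases of the restriction to `F`: the maximal independent subsets of `F`. -/
noncomputable def famRestrictBases {n : ℕ} (𝔅 : Finset (Finset (Fin n)))
    (F : Finset (Fin n)) : Finset (Finset (Fin n)) :=
  F.powerset.filter fun B =>
    FamIndep 𝔅 B ∧ ∀ B' ⊆ F, FamIndep 𝔅 B' → B ⊆ B' → B = B'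

open scoped Classical in
/-- The bases of the contraction by `F`: the sets `B \ F` where `B` is a basis meeting `F`
in a set of full rank `rk F`. -/
noncomputable def famContractBases {n : ℕ} (𝔅 : Finset (Finset (Fin n)))
    (F : Finset (Fin n)) : Finset (Finset (Fin n)) :=
  (𝔅.filter fun B => (B ∩ F).card = famRk 𝔅 F).image (· \ F)

/-- `i` and `j` are related if equal or contained in a common circuit. -/
def FamConnRel {n : ℕ} (𝔅 : Finset (Finset (Fin n))) (i j : Fin n) : Prop :=
  i = j ∨ ∃ C, FamCircuit 𝔅 C ∧ i ∈ C ∧ j ∈ C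

/-- Number of connected components: number of classes of the equivalence relation
generated by `FamConnRel`. -/
noncomputable def famNumComponents {n : ℕ} (𝔅 : Finset (Finset (Fin n))) : ℕ :=
  Nat.card (Quot (FamConnRel 𝔅))

/-- Connectedness of the matroid presented by bases `𝔅` on the ground set `E`:
any two distinct elements of `E` lie in a common circuit (within `E`). -/
def FamConnectedOn {n : ℕ} (𝔅 : Finset (Finset (Fin n))) (E : Finset (Fin n)) : Prop :=
  ∀ i ∈ E, ∀ j ∈ E, i ≠ j → ∃ C, C ⊆ E ∧ FamCircuit 𝔅 C ∧ i ∈ C ∧ j ∈ C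

/-- A matroid of rank `r` on the ground set `Fin n`, given by its collection of bases:
`r`-element sets satisfying the basis exchange axiom. -/
structure FinMatroid (n r : ℕ) where
  bases : Finset (Finset (Fin n))
  bases_nonempty : bases.Nonempty
  card_bases : ∀ B ∈ bases, B.card = r
  exchange : ∀ B₁ ∈ bases, ∀ B₂ ∈ bases, ∀ i ∈ B₁ \ B₂,
      ∃ j ∈ B₂ \ B₁, insert j (B₁.erase i) ∈ bases

namespace FinMatroid

variable {n r : ℕ}

def Indep (M : FinMatroid n r) (I : Finset (Fin n)) : Prop := FamIndep M.bases I

def IsCircuit (M : FinMatroid n r) (C : Finset (Fin n)) : Prop := FamCircuit M.bases C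

noncomputable def rk (M : FinMatroid n r) (F : Finset (Fin n)) : ℕ := famRk M.bases F

/-- A flat: no circuit leaves exactly one element outside `F`. -/
def IsFlat (M : FinMatroid n r) (F : Finset (Fin n)) : Prop :=
  ∀ C, M.IsCircuit C → (C \ F).card ≠ 1

open scoped Classical in
/-- Closure of a set: the intersection of all flats containing it (the smallest flat
containing it). -/
noncomputable def closure (M : FinMatroid n r) (S : Finset (Fin n)) : Finset (Fin n) :=
  Finset.univ.filter fun i => ∀ F, M.IsFlat F → S ⊆ F → i ∈ F

/-- No single element is dependent. -/
def Loopless (M : FinMatroid n r) : Prop := ∀ i : Fin n, M.Indep {i}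

noncomputable def numComponents (M : FinMatroid n r) : ℕ := famNumComponents M.bases

/-- Any two distinct elements lie in a common circuit. -/
def Connected (M : FinMatroid n r) : Prop :=
  ∀ i j : Fin n, i ≠ j → ∃ C, M.IsCircuit C ∧ i ∈ C ∧ j ∈ C

/-- `B` is a `w`-maximal basis of `M`. -/
def IsMaxBasis (M : FinMatroid n r) (w : Fin n → ℝ) (B : Finset (Fin n)) : Prop :=
  B ∈ M.bases ∧ ∀ B' ∈ M.bases, ∑ i ∈ B', w i ≤ ∑ i ∈ B, w i

open scoped Classical in
/-- The bases of the matroid `M_w`: the `w`-maximal bases of `M`. -/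
noncomputable def maxBases (M : FinMatroid n r) (w : Fin n → ℝ) :
    Finset (Finset (Fin n)) :=
  M.bases.filter fun B => ∀ B' ∈ M.bases, ∑ i ∈ B', w i ≤ ∑ i ∈ B, w i

/-- Membership in the Bergman fan: on every circuit the minimum of `w` is attained
at least twice. -/
def InBergmanFan (M : FinMatroid n r) (w : Fin n → ℝ) : Prop :=
  ∀ C, M.IsCircuit C → ∃ i ∈ C, ∃ j ∈ C, i ≠ j ∧ w i = w j ∧ ∀ k ∈ C, w i ≤ w k

/-- The matroid polytope: convex hull of the indicator vectors of the bases. -/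
noncomputable def polytope (M : FinMatroid n r) : Set (Fin n → ℝ) :=
  convexHull ℝ (indVec '' ↑M.bases)

noncomputable def restrictBases (M : FinMatroid n r) (F : Finset (Fin n)) :
    Finset (Finset (Fin n)) :=
  famRestrictBases M.bases F

noncomputable def contractBases (M : FinMatroid n r) (F : Finset (Fin n)) :
    Finset (Finset (Fin n)) :=
  famContractBases M.bases F

/-- `𝓖` is a building set in the lattice of flats of `M` (with bottom element `∅` and
join = closure of union): for every nonempty flat `X`, the join map is an order
isomorphism from the product of the lower intervals of the maximal elements of
`𝓖` below `X` onto the lower interval of `X`. -/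
def IsFlatBuilding (M : FinMatroid n r) (𝓖 : Set (Finset (Fin n))) : Prop :=
  (∀ F ∈ 𝓖, M.IsFlat F ∧ F ≠ ∅) ∧
  ∀ X, M.IsFlat X → X ≠ ∅ →
    ∃ (k : ℕ) (g : Fin k → Finset (Fin n)),
      Function.Injective g ∧
      (∀ i, g i ∈ 𝓖 ∧ g i ⊆ X) ∧
      (∀ i, ∀ H ∈ 𝓖, H ⊆ X → g i ⊆ H → g i = H) ∧
      (∀ H ∈ 𝓖, H ⊆ X → ∃ i, H ⊆ g i) ∧
      ∃ e : (∀ i : Fin k, {F : Finset (Fin n) // M.IsFlat F ∧ F ⊆ g i}) ≃o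
              {F : Finset (Fin n) // M.IsFlat F ∧ F ⊆ X},
        ∀ y, (e y).1 = M.closure (Finset.univ.sup fun i => (y i).1)

/-- `S` is nested with respect to `𝓖` (in the lattice of flats of `M`): `S ⊆ 𝓖` and for
every subcollection of at least two pairwise incomparable members, their join (the
closure of their union) is not in `𝓖`. -/
def IsNested (M : FinMatroid n r) (𝓖 : Set (Finset (Fin n)))
    (S : Finset (Finset (Fin n))) : Prop :=
  ↑S ⊆ 𝓖 ∧ ∀ T ⊆ S, 2 ≤ T.card →
    (∀ A ∈ T, ∀ B ∈ T, A ≠ B → ¬ A ⊆ B ∧ ¬ B ⊆ A) →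
    M.closure (T.sup id) ∉ 𝓖

end FinMatroid

/-- A building set in the Boolean lattice of subsets of `Fin r`: for every nonempty
`X ⊆ [r]`, the union map is an order isomorphism from the product of the lower
intervals of the maximal elements of `𝓕` below `X` onto the lower interval of `X`. -/
def BoolBuilding {r : ℕ} (𝓕 : Set (Finset (Fin r))) : Prop :=
  (∀ F ∈ 𝓕, F ≠ ∅) ∧
  ∀ X : Finset (Fin r), X ≠ ∅ →
    ∃ (k : ℕ) (g : Fin k → Finset (Fin r)),
      Function.Injective g ∧
      (∀ i, g i ∈ 𝓕 ∧ g i ⊆ X) ∧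
      (∀ i, ∀ H ∈ 𝓕, H ⊆ X → g i ⊆ H → g i = H) ∧
      (∀ H ∈ 𝓕, H ⊆ X → ∃ i, H ⊆ g i) ∧
      ∃ e : (∀ i : Fin k, {F : Finset (Fin r) // F ⊆ g i}) ≃o
              {F : Finset (Fin r) // F ⊆ X},
        ∀ y, (e y).1 = Finset.univ.sup fun i => (y i).1

/-- `S` is nested with respect to `𝓕` in the Boolean lattice: for every subcollection
of at least two pairwise incomparable members, their union is not in `𝓕`. -/
def BoolNested {r : ℕ} (𝓕 : Set (Finset (Fin r))) (S : Finset (Finset (Fin r))) : Prop :=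
  ↑S ⊆ 𝓕 ∧ ∀ T ⊆ S, 2 ≤ T.card →
    (∀ A ∈ T, ∀ B ∈ T, A ≠ B → ¬ A ⊆ B ∧ ¬ B ⊆ A) →
    T.sup id ∉ 𝓕

/-- The simplex `Δ_F = conv{e_i : i ∈ F}`. -/
noncomputable def faceSimplex {r : ℕ} (F : Finset (Fin r)) : Set (Fin r → ℝ) :=
  convexHull ℝ ((fun i => (Pi.single i 1 : Fin r → ℝ)) '' ↑F)

/-- The Minkowski sum `Δ_𝓕 = Σ_{F ∈ 𝓕} Δ_F`. -/
noncomputable def minkSum {r : ℕ} (𝓕 : Finset (Finset (Fin r))) : Set (Fin r → ℝ) :=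
  ∑ F ∈ 𝓕, faceSimplex F

/-!
The direction of a Minkowski sum of nonempty sets is the sum of the directions, and the direction
of `Δ_F` is the space of vectors supported on `F` with coordinate sum zero, of dimension `|F| - 1`;
since `[r] ∈ 𝓕` this gives `dim Δ_𝓕 = r - 1`.

On `Δ_F` the functional `∑_{i ∈ G} x_i` is at least `[F ⊆ G]`, so the face of `Δ_𝓕` on which it
equals `#{F ∈ 𝓕 : F ⊆ G}` is the Minkowski sum of the faces where each summand attains its
minimum: `Δ_F` for `F ⊆ G` and `Δ_{F \ G}` otherwise. Its direction is the direct sum of the span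
`V_G = vectorSpanBelow 𝓕 G` of the directions of the `Δ_F` with `F ⊆ G` and the direction of
`Δ_{Gᶜ}` (contributed by `F = [r]`).
Hence the face is a facet iff `V_G` is everything supported on `G` with sum zero, which happens
iff `G` is connected in the hypergraph formed by the members of `𝓕` inside `G`: otherwise the
coordinate sum over one component vanishes on `V_G`.

It remains to see that the connected sets form the building closure. A family is a building set
in the Boolean lattice iff every nonempty `X` is partitioned by members of the family that absorb
all members below `X`. The components of `X` do this for the connected sets, and conversely, in a
building set containing `𝓕`, the blocks of such a partition of a connected `G` absorb every
`F ∈ 𝓕` below `G`, so a single block must be all of `G`.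
-/

section VectorSpan

variable {k V : Type*} [Ring k] [AddCommGroup V] [Module k V]

theorem vectorSpan_add {s t : Set V} (hs : s.Nonempty) (ht : t.Nonempty) :
    vectorSpan k (s + t) = vectorSpan k s ⊔ vectorSpan k t := by
  obtain ⟨a₀, ha₀⟩ := hs
  obtain ⟨b₀, hb₀⟩ := ht
  refine le_antisymm ?_ (sup_le ?_ ?_)
  · rw [vectorSpan_def, Submodule.span_le]
    rintro _ ⟨_, ⟨a, ha, b, hb, rfl⟩, _, ⟨a', ha', b', hb', rfl⟩, rfl⟩
    change (a + b) - (a' + b') ∈ _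
    rw [add_sub_add_comm]
    exact Submodule.add_mem _ (Submodule.mem_sup_left (vsub_mem_vectorSpan k ha ha'))
      (Submodule.mem_sup_right (vsub_mem_vectorSpan k hb hb'))
  · rw [← vectorSpan_vadd k s b₀]
    refine vectorSpan_mono k ?_
    rintro _ ⟨a, ha, rfl⟩
    change b₀ + a ∈ s + t
    rw [add_comm b₀ a]
    exact Set.add_mem_add ha hb₀
  · rw [← vectorSpan_vadd k t a₀]
    refine vectorSpan_mono k ?_
    rintro _ ⟨b, hb, rfl⟩
    exact Set.add_mem_add ha₀ hb

theorem vectorSpan_finsetSum {ι : Type*} {s : Finset ι} {f : ι → Set V}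
    (hf : ∀ i ∈ s, (f i).Nonempty) :
    vectorSpan k (∑ i ∈ s, f i) = s.sup fun i => vectorSpan k (f i) := by
  classical
  induction s using Finset.induction_on with
  | empty => exact vectorSpan_singleton k 0
  | insert a s ha ih =>
    have hs : (∑ i ∈ s, f i).Nonempty := Finset.sum_induction _ Set.Nonempty
      (fun _ _ => Set.Nonempty.add) Set.zero_nonempty fun i hi => hf i (mem_insert_of_mem hi)
    rw [sum_insert ha, sup_insert, vectorSpan_add (hf a (mem_insert_self a s)) hs,
      ih fun i hi => hf i (mem_insert_of_mem hi)]

variable (k) in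
theorem vectorSpan_le_span (s : Set V) : vectorSpan k s ≤ Submodule.span k s := by
  rw [vectorSpan_def, Submodule.span_le]
  rintro _ ⟨a, ha, b, hb, rfl⟩
  exact sub_mem (Submodule.subset_span ha) (Submodule.subset_span hb)

end VectorSpan

theorem sep_finsetSum_eq_finsetSum_sep {ι V M Φ : Type*} [AddCommMonoid V] [AddCommMonoid M]
    [PartialOrder M] [IsOrderedCancelAddMonoid M] [FunLike Φ V M] [AddMonoidHomClass Φ V M]
    (φ : Φ) {s : Finset ι} {S : ι → Set V} {c : ι → M} (hc : ∀ i ∈ s, ∀ x ∈ S i, c i ≤ φ x) :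
    {x ∈ ∑ i ∈ s, S i | φ x = ∑ i ∈ s, c i} = ∑ i ∈ s, {x ∈ S i | φ x = c i} := by
  ext x
  simp only [Set.mem_sep_iff, Set.mem_finsetSum]
  constructor
  · rintro ⟨⟨g, hg, rfl⟩, hφ⟩
    rw [map_sum, eq_comm, sum_eq_sum_iff_of_le fun i hi => hc i hi _ (hg hi)] at hφ
    exact ⟨g, fun hi => ⟨hg hi, (hφ _ hi).symm⟩, rfl⟩
  · rintro ⟨g, hg, rfl⟩
    refine ⟨⟨g, fun hi => (hg hi).1, rfl⟩, ?_⟩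
    rw [map_sum]
    exact sum_congr rfl fun i hi => (hg hi).2

def coordSum {ι : Type*} (A : Finset ι) : (ι → ℝ) →ₗ[ℝ] ℝ := ∑ i ∈ A, LinearMap.proj i

@[simp]
theorem coordSum_apply {ι : Type*} (A : Finset ι) (x : ι → ℝ) :
    coordSum A x = ∑ i ∈ A, x i := by
  simp [coordSum]

section FaceSimplex

variable {r : ℕ} {F G : Finset (Fin r)} {x : Fin r → ℝ}

theorem mem_faceSimplex : x ∈ faceSimplex F ↔ x ∈ stdSimplex ℝ (Fin r) ∧ ∀ i ∉ F, x i = 0 := by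
  constructor
  · refine fun hx => convexHull_min (t := stdSimplex ℝ (Fin r) ∩ {y | ∀ i ∉ F, y i = 0}) ?_
      ((convex_stdSimplex ℝ _).inter ?_) hx
    · rintro _ ⟨i, hi, rfl⟩
      exact ⟨single_mem_stdSimplex ℝ i,
        fun j hj => Pi.single_eq_of_ne (ne_of_mem_of_not_mem hi hj).symm 1⟩
    · intro y hy z hz a b _ _ _ i hi
      simp [hy i hi, hz i hi]
  · rintro ⟨⟨hx0, hx1⟩, hxF⟩
    have hsum : ∑ i ∈ F, x i = 1 := by
      rw [← hx1]
      exact sum_subset (subset_univ F) fun i _ hi => hxF i hi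
    have hx : ∑ i ∈ F, x i • (Pi.single i 1 : Fin r → ℝ) = x := by
      ext j
      by_cases hj : j ∈ F <;> simp [Finset.sum_apply, Pi.single_apply, hj, hxF]
    rw [← hx]
    exact (convex_convexHull ℝ _).sum_mem (fun i _ => hx0 i) hsum
      fun i hi => subset_convexHull ℝ _ ⟨i, hi, rfl⟩

theorem faceSimplex_nonempty (hF : F.Nonempty) : (faceSimplex F).Nonempty :=
  let ⟨i, hi⟩ := hF
  ⟨_, subset_convexHull ℝ _ ⟨i, hi, rfl⟩⟩

theorem sum_nonneg_of_mem_faceSimplex (hx : x ∈ faceSimplex F) : 0 ≤ ∑ i ∈ G, x i :=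
  sum_nonneg fun i _ => (mem_faceSimplex.1 hx).1.1 i

theorem sum_eq_one_of_mem_faceSimplex (hFG : F ⊆ G) (hx : x ∈ faceSimplex F) :
    ∑ i ∈ G, x i = 1 := by
  obtain ⟨⟨-, hx1⟩, hxF⟩ := mem_faceSimplex.1 hx
  rw [← hx1]
  exact sum_subset (subset_univ G) fun i _ hi => hxF i fun hiF => hi (hFG hiF)

theorem faceSimplex_sdiff : faceSimplex (F \ G) = {x ∈ faceSimplex F | ∑ i ∈ G, x i = 0} := by
  ext x
  simp only [mem_faceSimplex, mem_sdiff, not_and, not_not]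
  constructor
  · rintro ⟨hx, hxF⟩
    exact ⟨⟨hx, fun i hi => hxF i fun h => absurd h hi⟩,
      sum_eq_zero fun i hi => hxF i fun _ => hi⟩
  · rintro ⟨⟨hx, hxF⟩, hsum⟩
    refine ⟨hx, fun i hi => ?_⟩
    by_cases hiF : i ∈ F
    · exact (sum_eq_zero_iff_of_nonneg fun j _ => hx.1 j).1 hsum i (hi hiF)
    · exact hxF i hiF

theorem faceSimplex_sep_sum_eq_ite :
    {x ∈ faceSimplex F | ∑ i ∈ G, x i = if F ⊆ G then 1 else 0} =
      faceSimplex (if F ⊆ G then F else F \ G) := by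
  split_ifs with hFG
  · exact Set.sep_eq_self_iff_mem_true.2 fun x hx => sum_eq_one_of_mem_faceSimplex hFG hx
  · exact faceSimplex_sdiff.symm

theorem vectorSpan_faceSimplex (F : Finset (Fin r)) :
    vectorSpan ℝ (faceSimplex F) =
      vectorSpan ℝ ((fun i => (Pi.single i 1 : Fin r → ℝ)) '' ↑F) := by
  rw [← direction_affineSpan, faceSimplex, affineSpan_convexHull, direction_affineSpan]

theorem finrank_vectorSpan_faceSimplex (hF : F.Nonempty) :
    Module.finrank ℝ (vectorSpan ℝ (faceSimplex F)) = #F - 1 := by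
  classical
  rw [vectorSpan_faceSimplex, ← coe_image]
  have hcard : #F = #F - 1 + 1 := (Nat.sub_add_cancel hF.card_pos).symm
  exact (Pi.linearIndependent_single_one (Fin r) ℝ).affineIndependent
    |>.finrank_vectorSpan_image_finset hcard

theorem vectorSpan_faceSimplex_mono (h : F ⊆ G) :
    vectorSpan ℝ (faceSimplex F) ≤ vectorSpan ℝ (faceSimplex G) :=
  vectorSpan_mono ℝ (convexHull_mono (Set.image_mono (coe_subset.2 h)))

theorem single_sub_single_mem_vectorSpan_faceSimplex {i j : Fin r} (hi : i ∈ F) (hj : j ∈ F) :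
    Pi.single i 1 - Pi.single j 1 ∈ vectorSpan ℝ (faceSimplex F) :=
  vsub_mem_vectorSpan ℝ (subset_convexHull ℝ _ ⟨i, hi, rfl⟩)
    (subset_convexHull ℝ _ ⟨j, hj, rfl⟩)

theorem disjoint_vectorSpan_faceSimplex_compl (G : Finset (Fin r)) :
    Disjoint (vectorSpan ℝ (faceSimplex G)) (vectorSpan ℝ (faceSimplex Gᶜ)) := by
  rw [vectorSpan_faceSimplex, vectorSpan_faceSimplex]
  exact ((Pi.linearIndependent_single_one (Fin r) ℝ).disjoint_span_image
    (disjoint_coe.2 disjoint_compl_right)).mono (vectorSpan_le_span ℝ _) (vectorSpan_le_span ℝ _)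

end FaceSimplex

section MinkSum

variable {r : ℕ} {𝓕 : Finset (Finset (Fin r))}

theorem vectorSpan_minkSum (h : ∀ F ∈ 𝓕, F ≠ ∅) :
    vectorSpan ℝ (minkSum 𝓕) = 𝓕.sup fun F => vectorSpan ℝ (faceSimplex F) :=
  vectorSpan_finsetSum fun F hF => faceSimplex_nonempty (nonempty_iff_ne_empty.2 (h F hF))

theorem face_minkSum_eq (𝓕 : Finset (Finset (Fin r))) (G : Finset (Fin r)) :
    {x ∈ minkSum 𝓕 | ∑ i ∈ G, x i = (#(𝓕.filter fun F => F ⊆ G) : ℝ)} =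
      ∑ F ∈ 𝓕, faceSimplex (if F ⊆ G then F else F \ G) := by
  have hle : ∀ F ∈ 𝓕, ∀ x ∈ faceSimplex F, (if F ⊆ G then 1 else 0) ≤ coordSum G x := by
    intro F _ x hx
    rw [coordSum_apply]
    split_ifs with hFG
    · exact (sum_eq_one_of_mem_faceSimplex hFG hx).ge
    · exact sum_nonneg_of_mem_faceSimplex hx
  have := sep_finsetSum_eq_finsetSum_sep (coordSum G) hle
  simp only [coordSum_apply, sum_boole, faceSimplex_sep_sum_eq_ite] at this
  exact this

end MinkSum

section FamilyConnected

variable {α : Type*} {𝓕 : Finset (Finset α)} {X Y G H : Finset α} {a b : α}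

def FamilyAdj (𝓕 : Finset (Finset α)) (X : Finset α) (a b : α) : Prop :=
  ∃ F ∈ 𝓕, F ⊆ X ∧ a ∈ F ∧ b ∈ F

def IsFamilyConnected (𝓕 : Finset (Finset α)) (X : Finset α) : Prop :=
  X.Nonempty ∧ ∀ a ∈ X, ∀ b ∈ X, Relation.ReflTransGen (FamilyAdj 𝓕 X) a b

theorem FamilyAdj.symm (h : FamilyAdj 𝓕 X a b) : FamilyAdj 𝓕 X b a :=
  let ⟨F, hF, hFX, ha, hb⟩ := h
  ⟨F, hF, hFX, hb, ha⟩

instance : Std.Symm (FamilyAdj 𝓕 X) := ⟨fun _ _ => FamilyAdj.symm⟩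

theorem FamilyAdj.mono (hXY : X ⊆ Y) (h : FamilyAdj 𝓕 X a b) : FamilyAdj 𝓕 Y a b :=
  let ⟨F, hF, hFX, ha, hb⟩ := h
  ⟨F, hF, hFX.trans hXY, ha, hb⟩

theorem isFamilyConnected_of_mem {F : Finset α} (hF : F ∈ 𝓕) (hne : F ≠ ∅) :
    IsFamilyConnected 𝓕 F :=
  ⟨nonempty_iff_ne_empty.2 hne, fun _ ha _ hb => .single ⟨F, hF, subset_rfl, ha, hb⟩⟩

theorem mem_of_reflTransGen_familyAdj {S : Finset α}
    (hS : ∀ F ∈ 𝓕, F ⊆ X → ∀ c ∈ F, c ∈ S → F ⊆ S)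
    (h : Relation.ReflTransGen (FamilyAdj 𝓕 X) a b) (ha : a ∈ S) : b ∈ S := by
  induction h with
  | refl => exact ha
  | tail _ hcd ih =>
    obtain ⟨F, hF, hFX, hc, hd⟩ := hcd
    exact hS F hF hFX _ hc ih hd

open Classical in
noncomputable def component (𝓕 : Finset (Finset α)) (X : Finset α) (a : α) : Finset α :=
  X.filter (Relation.ReflTransGen (FamilyAdj 𝓕 X) a)

theorem mem_component :
    b ∈ component 𝓕 X a ↔ b ∈ X ∧ Relation.ReflTransGen (FamilyAdj 𝓕 X) a b := by
  classical
  simp [component]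

theorem mem_component_self (ha : a ∈ X) : a ∈ component 𝓕 X a :=
  mem_component.2 ⟨ha, .refl⟩

theorem component_subset : component 𝓕 X a ⊆ X := fun _ hb => (mem_component.1 hb).1

theorem component_eq_of_mem (hb : b ∈ component 𝓕 X a) :
    component 𝓕 X b = component 𝓕 X a := by
  have hab := (mem_component.1 hb).2
  ext c
  simp only [mem_component, and_congr_right_iff]
  exact fun _ => ⟨fun hbc => hab.trans hbc, fun hac => (Std.Symm.symm _ _ hab).trans hac⟩

theorem subset_component_of_mem {F : Finset α} (hF : F ∈ 𝓕) (hFX : F ⊆ X) {c : α}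
    (hc : c ∈ F) (hcX : c ∈ component 𝓕 X a) : F ⊆ component 𝓕 X a := fun _ hd =>
  mem_component.2 ⟨hFX hd, (mem_component.1 hcX).2.tail ⟨F, hF, hFX, hc, hd⟩⟩

theorem reflTransGen_familyAdj_component {c : α} (hb : b ∈ component 𝓕 X a)
    (h : Relation.ReflTransGen (FamilyAdj 𝓕 X) b c) :
    Relation.ReflTransGen (FamilyAdj 𝓕 (component 𝓕 X a)) b c := by
  induction h with
  | refl => exact .refl
  | tail hbd hde ih =>
    obtain ⟨F, hF, hFX, hd, he⟩ := hde
    have hdX := mem_of_reflTransGen_familyAdj (fun F hF hFX _ => subset_component_of_mem hF hFX)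
      hbd hb
    exact ih.tail ⟨F, hF, subset_component_of_mem hF hFX hd hdX, hd, he⟩

theorem isFamilyConnected_component (ha : a ∈ X) :
    IsFamilyConnected 𝓕 (component 𝓕 X a) := by
  refine ⟨⟨a, mem_component_self ha⟩, fun b hb c hc => reflTransGen_familyAdj_component hb ?_⟩
  exact (Std.Symm.symm _ _ (mem_component.1 hb).2).trans (mem_component.1 hc).2

theorem IsFamilyConnected.subset_component (hH : IsFamilyConnected 𝓕 H) (hHX : H ⊆ X)
    (ha : a ∈ H) : H ⊆ component 𝓕 X a := fun b hb =>
  mem_component.2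
    ⟨hHX hb, Relation.ReflTransGen.mono (fun _ _ => FamilyAdj.mono hHX) _ _ (hH.2 a ha b hb)⟩

end FamilyConnected

section Partition

open Function

variable {ι α : Type*} [Fintype ι] [DecidableEq α] {g : ι → Finset α}

theorem sup_inter_eq_of_pairwise_disjoint (hg : Pairwise (Disjoint on g))
    (y : ∀ i, {F : Finset α // F ⊆ g i}) (i : ι) :
    (univ.sup fun j => (y j).1) ∩ g i = (y i).1 := by
  refine subset_antisymm (fun a ha => ?_) fun a ha => mem_inter.2
    ⟨mem_sup.2 ⟨i, mem_univ i, ha⟩, (y i).2 ha⟩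
  obtain ⟨hay, hai⟩ := mem_inter.1 ha
  obtain ⟨j, -, haj⟩ := mem_sup.1 hay
  obtain rfl : j = i := by
    by_contra hji
    exact disjoint_left.1 (hg hji) ((y j).2 haj) hai
  exact haj

def partitionOrderIso (hg : Pairwise (Disjoint on g)) {X : Finset α} (hX : univ.sup g = X) :
    (∀ i, {F : Finset α // F ⊆ g i}) ≃o {F : Finset α // F ⊆ X} where
  toFun y := ⟨univ.sup fun i => (y i).1, hX ▸ sup_mono_fun fun i _ => (y i).2⟩
  invFun F i := ⟨F.1 ∩ g i, inter_subset_right⟩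
  left_inv y := funext fun i => Subtype.ext (sup_inter_eq_of_pairwise_disjoint hg y i)
  right_inv F := Subtype.ext <| by
    change (univ.sup fun i => F.1 ⊓ g i) = F.1
    rw [← sup_inf_distrib_left, hX, inf_eq_left.2 F.2]
  map_rel_iff' {y y'} := by
    refine ⟨fun h i => ?_, fun h => Subtype.coe_le_coe.1 (sup_mono_fun fun i _ => h i)⟩
    rw [← Subtype.coe_le_coe, ← sup_inter_eq_of_pairwise_disjoint hg y i,
      ← sup_inter_eq_of_pairwise_disjoint hg y' i]
    exact inter_subset_inter_right h

theorem pairwise_disjoint_of_injective_sup [DecidableEq ι]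
    (h : Injective fun y : (∀ i, {F : Finset α // F ⊆ g i}) => univ.sup fun i => (y i).1) :
    Pairwise (Disjoint on g) := by
  intro m m' hne
  rw [Function.onFun, disjoint_left]
  intro a ham ham'
  let y (j : ι) : ∀ i, {F : Finset α // F ⊆ g i} := fun i =>
    ⟨if i = j then {a} ∩ g i else ∅, by split_ifs; exacts [inter_subset_right, empty_subset _]⟩
  have hsup (j : ι) : (univ.sup fun i => (y j i).1) = {a} ∩ g j := by
    refine le_antisymm (Finset.sup_le fun i _ => ?_) (le_sup_of_le (mem_univ j) (by simp [y]))
    by_cases hij : i = j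
    · subst hij; simp [y]
    · simp [y, hij]
  have hyy : y m = y m' :=
    h (by simp only [hsup, singleton_inter_of_mem ham, singleton_inter_of_mem ham'])
  have := congrArg (fun y => (y m).1) hyy
  simp [y, hne, singleton_inter_of_mem ham] at this

end Partition

/-- The blocks of `P` are then exactly the maximal members of `𝓗` below `X`. -/
def IsFactorPartition {α : Type*} [DecidableEq α] (𝓗 : Set (Finset α)) (X : Finset α)
    (P : Finset (Finset α)) : Prop :=
  (∀ p ∈ P, p ∈ 𝓗 ∧ p ⊆ X) ∧ (P : Set (Finset α)).PairwiseDisjoint id ∧ P.sup id = X ∧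
    ∀ H ∈ 𝓗, H ⊆ X → ∃ p ∈ P, H ⊆ p

section BoolBuilding

variable {r : ℕ} {𝓗 : Set (Finset (Fin r))} {X : Finset (Fin r)}

theorem BoolBuilding.exists_isFactorPartition (hB : BoolBuilding 𝓗) (hX : X ≠ ∅) :
    ∃ P, IsFactorPartition 𝓗 X P := by
  obtain ⟨k, g, -, hmem, -, hcov, e, he⟩ := hB.2 X hX
  have hdisj : Pairwise (Function.onFun Disjoint g) := pairwise_disjoint_of_injective_sup
    fun y y' h => e.injective (Subtype.ext (by rw [he, he]; exact h))
  have hsup : univ.sup g = X := by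
    refine le_antisymm (Finset.sup_le fun i _ => (hmem i).2) ?_
    obtain ⟨y, hy⟩ := e.surjective ⟨X, subset_rfl⟩
    have hXy : X = univ.sup fun i => (y i).1 := by rw [← he, hy]
    rw [hXy]
    exact sup_mono_fun fun i _ => (y i).2
  refine ⟨univ.image g, ?_, ?_, ?_, ?_⟩
  · simpa using hmem
  · rintro _ hp _ hq hpq
    obtain ⟨i, -, rfl⟩ := mem_image.1 hp
    obtain ⟨j, -, rfl⟩ := mem_image.1 hq
    exact hdisj fun hij => hpq (congrArg g hij)
  · rwa [sup_image, Function.id_comp]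
  · intro H hH hHX
    obtain ⟨i, hi⟩ := hcov H hH hHX
    exact ⟨g i, mem_image_of_mem g (mem_univ i), hi⟩

theorem boolBuilding_of_isFactorPartition (hne : ∀ F ∈ 𝓗, F ≠ ∅)
    (hP : ∀ X : Finset (Fin r), X ≠ ∅ → ∃ P, IsFactorPartition 𝓗 X P) : BoolBuilding 𝓗 := by
  refine ⟨hne, fun X hX => ?_⟩
  obtain ⟨P, hmem, hdisj, hsup, habs⟩ := hP X hX
  let g (m : Fin #P) : Finset (Fin r) := P.equivFin.symm m
  have hgP (m : Fin #P) : g m ∈ P := (P.equivFin.symm m).2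
  have hginj : Function.Injective g := fun m m' h => P.equivFin.symm.injective (Subtype.ext h)
  have hgsup : univ.sup g = X := by
    rw [← hsup]
    refine le_antisymm (Finset.sup_le fun m _ => le_sup (f := id) (hgP m))
      (Finset.sup_le fun p hp => ?_)
    simpa [g] using le_sup (f := g) (mem_univ (P.equivFin ⟨p, hp⟩))
  refine ⟨#P, g, hginj, fun m => hmem _ (hgP m), fun m H hH hHX hgH => ?_, fun H hH hHX => ?_,
    partitionOrderIso (fun m m' h => hdisj (hgP m) (hgP m') (hginj.ne h)) hgsup, fun _ => rfl⟩
  · obtain ⟨p, hp, hHp⟩ := habs H hH hHX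
    obtain ⟨a, ha⟩ := nonempty_iff_ne_empty.2 (hne _ (hmem _ (hgP m)).1)
    obtain rfl : g m = p := hdisj.elim (hgP m) hp (not_disjoint_iff.2 ⟨a, ha, hHp (hgH ha)⟩)
    exact subset_antisymm hgH hHp
  · obtain ⟨p, hp, hHp⟩ := habs H hH hHX
    exact ⟨P.equivFin ⟨p, hp⟩, by simpa [g] using hHp⟩

end BoolBuilding

section BuildingClosure

variable {r : ℕ} {𝓕 : Finset (Finset (Fin r))} {G : Finset (Fin r)}

theorem isFactorPartition_components {X : Finset (Fin r)} :
    IsFactorPartition {G | IsFamilyConnected 𝓕 G} X (X.image (component 𝓕 X)) := by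
  refine ⟨?_, ?_, ?_, ?_⟩
  · simp only [mem_image, forall_exists_index, and_imp, forall_apply_eq_imp_iff₂]
    exact fun a ha => ⟨isFamilyConnected_component ha, component_subset⟩
  · simp only [coe_image]
    rintro _ ⟨a, -, rfl⟩ _ ⟨b, -, rfl⟩ hab
    refine disjoint_left.2 fun c hca hcb => hab ?_
    rw [← component_eq_of_mem hca, component_eq_of_mem hcb]
  · refine le_antisymm (Finset.sup_le ?_)
      fun a ha => mem_sup.2 ⟨_, mem_image_of_mem _ ha, mem_component_self ha⟩
    simp only [mem_image, forall_exists_index, and_imp, forall_apply_eq_imp_iff₂]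
    exact fun _ _ => component_subset
  · rintro H hH hHX
    obtain ⟨a, ha⟩ := hH.1
    exact ⟨_, mem_image_of_mem _ (hHX ha), hH.subset_component hHX ha⟩

theorem boolBuilding_setOf_isFamilyConnected : BoolBuilding {G | IsFamilyConnected 𝓕 G} :=
  boolBuilding_of_isFactorPartition (fun _ hG => nonempty_iff_ne_empty.1 hG.1)
    fun _ _ => ⟨_, isFactorPartition_components⟩

theorem IsFamilyConnected.mem_of_boolBuilding {𝓗 : Set (Finset (Fin r))} (hB : BoolBuilding 𝓗)
    (h𝓕 : ↑𝓕 ⊆ 𝓗) (hG : IsFamilyConnected 𝓕 G) : G ∈ 𝓗 := by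
  obtain ⟨P, hmem, hdisj, hsup, habs⟩ :=
    hB.exists_isFactorPartition (nonempty_iff_ne_empty.1 hG.1)
  obtain ⟨a, ha⟩ := hG.1
  obtain ⟨p, hp, hap⟩ : ∃ p ∈ P, a ∈ p := by
    rw [← hsup] at ha
    simpa using mem_sup.1 ha
  have hclosed : ∀ F ∈ 𝓕, F ⊆ G → ∀ b ∈ F, b ∈ p → F ⊆ p := by
    intro F hF hFG b hbF hbp
    obtain ⟨q, hq, hFq⟩ := habs F (h𝓕 hF) hFG
    obtain rfl : q = p := hdisj.elim hq hp (not_disjoint_iff.2 ⟨b, hFq hbF, hbp⟩)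
    exact hFq
  have hGp : G ⊆ p := fun b hb => mem_of_reflTransGen_familyAdj hclosed (hG.2 a ha b hb) hap
  rw [subset_antisymm hGp (hmem p hp).2]
  exact (hmem p hp).1

theorem mem_buildingClosure_iff (h : ∀ F ∈ 𝓕, F ≠ ∅) {𝓕hat : Set (Finset (Fin r))}
    (hB : BoolBuilding 𝓕hat) (hsub : ↑𝓕 ⊆ 𝓕hat)
    (hmin : ∀ 𝓗 : Set (Finset (Fin r)), BoolBuilding 𝓗 → ↑𝓕 ⊆ 𝓗 → 𝓕hat ⊆ 𝓗) :
    G ∈ 𝓕hat ↔ IsFamilyConnected 𝓕 G :=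
  ⟨fun hG => hmin _ boolBuilding_setOf_isFamilyConnected
    (fun F hF => isFamilyConnected_of_mem hF (h F hF)) hG,
    fun hG => hG.mem_of_boolBuilding hB hsub⟩

end BuildingClosure

section Dimension

variable {r : ℕ} {𝓕 : Finset (Finset (Fin r))} {G : Finset (Fin r)}

noncomputable def vectorSpanBelow (𝓕 : Finset (Finset (Fin r))) (G : Finset (Fin r)) :
    Submodule ℝ (Fin r → ℝ) :=
  (𝓕.filter (· ⊆ G)).sup fun F => vectorSpan ℝ (faceSimplex F)

theorem vectorSpanBelow_le : vectorSpanBelow 𝓕 G ≤ vectorSpan ℝ (faceSimplex G) :=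
  Finset.sup_le fun _ hF => vectorSpan_faceSimplex_mono (mem_filter.1 hF).2

theorem single_sub_single_mem_vectorSpanBelow {i j : Fin r}
    (h : Relation.ReflTransGen (FamilyAdj 𝓕 G) i j) :
    Pi.single j 1 - Pi.single i 1 ∈ vectorSpanBelow 𝓕 G := by
  induction h with
  | refl => simp
  | @tail b c _ hbc ih =>
    obtain ⟨F, hF, hFG, hb, hc⟩ := hbc
    rw [← sub_add_sub_cancel _ (Pi.single b 1)]
    exact add_mem (le_sup (f := fun F => vectorSpan ℝ (faceSimplex F)) (mem_filter.2 ⟨hF, hFG⟩)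
      (single_sub_single_mem_vectorSpan_faceSimplex hc hb)) ih

theorem IsFamilyConnected.vectorSpanBelow_eq (hG : IsFamilyConnected 𝓕 G) :
    vectorSpanBelow 𝓕 G = vectorSpan ℝ (faceSimplex G) := by
  obtain ⟨⟨i₀, hi₀⟩, hconn⟩ := hG
  refine le_antisymm vectorSpanBelow_le ?_
  rw [vectorSpan_faceSimplex, vectorSpan_eq_span_vsub_set_right ℝ (Set.mem_image_of_mem _ hi₀),
    Submodule.span_le]
  rintro _ ⟨_, ⟨i, hi, rfl⟩, rfl⟩
  exact single_sub_single_mem_vectorSpanBelow (hconn i₀ hi₀ i hi)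

theorem isFamilyConnected_of_vectorSpanBelow_eq (hG : G.Nonempty)
    (h : vectorSpanBelow 𝓕 G = vectorSpan ℝ (faceSimplex G)) : IsFamilyConnected 𝓕 G := by
  classical
  refine ⟨hG, fun a ha b hb => ?_⟩
  set S := G.filter (Relation.ReflTransGen (FamilyAdj 𝓕 G) a)
  have hS : ∀ F ∈ 𝓕, F ⊆ G → ∀ i ∈ F, ∀ j ∈ F, (i ∈ S ↔ j ∈ S) := by
    intro F hF hFG i hi j hj
    simp only [S, mem_filter]
    exact ⟨fun ⟨_, hai⟩ => ⟨hFG hj, hai.tail ⟨F, hF, hFG, hi, hj⟩⟩,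
      fun ⟨_, haj⟩ => ⟨hFG hi, haj.tail ⟨F, hF, hFG, hj, hi⟩⟩⟩
  have hker : vectorSpanBelow 𝓕 G ≤ LinearMap.ker (coordSum S) := by
    refine Finset.sup_le fun F hF => ?_
    rw [vectorSpan_faceSimplex, vectorSpan_def, Submodule.span_le]
    rintro _ ⟨_, ⟨i, hi, rfl⟩, _, ⟨j, hj, rfl⟩, rfl⟩
    obtain ⟨hF, hFG⟩ := mem_filter.1 hF
    simp [vsub_eq_sub, hS F hF hFG i hi j hj]
  have haS : a ∈ S := mem_filter.2 ⟨ha, .refl⟩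
  have hab := hker (h ▸ single_sub_single_mem_vectorSpan_faceSimplex hb ha)
  by_cases hbS : b ∈ S
  · exact (mem_filter.1 hbS).2
  · simp [haS, hbS] at hab

theorem finrank_vectorSpanBelow_eq_iff (hG : G.Nonempty) :
    Module.finrank ℝ (vectorSpanBelow 𝓕 G) = #G - 1 ↔ IsFamilyConnected 𝓕 G := by
  rw [← finrank_vectorSpan_faceSimplex hG]
  refine ⟨fun h => isFamilyConnected_of_vectorSpanBelow_eq hG
    (Submodule.eq_of_le_of_finrank_eq vectorSpanBelow_le h), fun h => by rw [h.vectorSpanBelow_eq]⟩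

theorem finrank_vectorSpan_minkSum (h : ∀ F ∈ 𝓕, F ≠ ∅) (htop : univ ∈ 𝓕) :
    Module.finrank ℝ (vectorSpan ℝ (minkSum 𝓕)) = r - 1 := by
  have hsup : (𝓕.sup fun F => vectorSpan ℝ (faceSimplex F)) = vectorSpan ℝ (faceSimplex univ) :=
    le_antisymm (Finset.sup_le fun F _ => vectorSpan_faceSimplex_mono (subset_univ F))
      (le_sup (f := fun F => vectorSpan ℝ (faceSimplex F)) htop)
  rw [vectorSpan_minkSum h, hsup,
    finrank_vectorSpan_faceSimplex (nonempty_iff_ne_empty.2 (h _ htop)), card_univ,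
    Fintype.card_fin]

theorem vectorSpan_face_minkSum (h : ∀ F ∈ 𝓕, F ≠ ∅) (htop : univ ∈ 𝓕) (hG : G ≠ univ) :
    vectorSpan ℝ {x ∈ minkSum 𝓕 | ∑ i ∈ G, x i = (#(𝓕.filter fun F => F ⊆ G) : ℝ)} =
      vectorSpanBelow 𝓕 G ⊔ vectorSpan ℝ (faceSimplex Gᶜ) := by
  have hne : ∀ F ∈ 𝓕, (faceSimplex (if F ⊆ G then F else F \ G)).Nonempty := fun F hF => by
    split_ifs with hFG
    · exact faceSimplex_nonempty (nonempty_iff_ne_empty.2 (h F hF))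
    · exact faceSimplex_nonempty (sdiff_nonempty.2 hFG)
  have htopG : ¬ (univ : Finset (Fin r)) ⊆ G := fun hsub => hG (univ_subset_iff.1 hsub)
  rw [face_minkSum_eq, vectorSpan_finsetSum hne]
  simp only [apply_ite (fun F => vectorSpan ℝ (faceSimplex F))]
  rw [sup_ite]
  congr 1
  refine le_antisymm (Finset.sup_le fun F _ => vectorSpan_faceSimplex_mono ?_) ?_
  · exact fun i hi => mem_compl.2 (mem_sdiff.1 hi).2
  · simpa [compl_eq_univ_sdiff] using
      le_sup (f := fun F => vectorSpan ℝ (faceSimplex (F \ G))) (mem_filter.2 ⟨htop, htopG⟩)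

theorem finrank_vectorSpan_face_minkSum (h : ∀ F ∈ 𝓕, F ≠ ∅) (htop : univ ∈ 𝓕)
    (hG : G ≠ univ) :
    Module.finrank ℝ
        (vectorSpan ℝ {x ∈ minkSum 𝓕 | ∑ i ∈ G, x i = (#(𝓕.filter fun F => F ⊆ G) : ℝ)}) =
      Module.finrank ℝ (vectorSpanBelow 𝓕 G) + (r - #G - 1) := by
  have hdisj : vectorSpanBelow 𝓕 G ⊓ vectorSpan ℝ (faceSimplex Gᶜ) = ⊥ :=
    disjoint_iff.1 ((disjoint_vectorSpan_faceSimplex_compl G).mono_left vectorSpanBelow_le)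
  have hGc : Gᶜ.Nonempty := nonempty_iff_ne_empty.2 (by rwa [Ne, compl_eq_empty_iff])
  have := Submodule.finrank_sup_add_finrank_inf_eq (vectorSpanBelow 𝓕 G)
    (vectorSpan ℝ (faceSimplex Gᶜ))
  rw [hdisj, finrank_bot, add_zero, finrank_vectorSpan_faceSimplex hGc, card_compl,
    Fintype.card_fin] at this
  rw [vectorSpan_face_minkSum h htop hG, this]

end Dimension

/-- If `[r] ∈ 𝓕` (members nonempty), then `Δ_𝓕` has dimension `r - 1`,
and for every nonempty proper `G ⊊ [r]` the face of `Δ_𝓕` where `∑_{i∈G} x_i` equals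
`#{F ∈ 𝓕 : F ⊆ G}` is a facet (has dimension `r - 2`) iff `G` lies in the building
closure `𝓕hat` of `𝓕`. -/
theorem statement10 {r : ℕ} (𝓕 : Finset (Finset (Fin r))) (h : ∀ F ∈ 𝓕, F ≠ ∅)
    (htop : Finset.univ ∈ 𝓕) (𝓕hat : Set (Finset (Fin r)))
    (hhat : BoolBuilding 𝓕hat ∧ ↑𝓕 ⊆ 𝓕hat ∧
      ∀ 𝓗 : Set (Finset (Fin r)), BoolBuilding 𝓗 → ↑𝓕 ⊆ 𝓗 → 𝓕hat ⊆ 𝓗) :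
    Module.finrank ℝ (affineSpan ℝ (minkSum 𝓕)).direction = r - 1 ∧
    ∀ G : Finset (Fin r), G ≠ ∅ → G ≠ Finset.univ →
      (Module.finrank ℝ (affineSpan ℝ
          {x ∈ minkSum 𝓕 |
            ∑ i ∈ G, x i = ((𝓕.filter fun F => F ⊆ G).card : ℝ)}).direction = r - 2 ↔
        G ∈ 𝓕hat) := by
  refine ⟨by rw [direction_affineSpan, finrank_vectorSpan_minkSum h htop], fun G hG hGu => ?_⟩
  have hGne : G.Nonempty := nonempty_iff_ne_empty.2 hG
  have hGr : #G < r := by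
    simpa using card_lt_card (ssubset_univ_iff.2 hGu)
  have hle : Module.finrank ℝ (vectorSpanBelow 𝓕 G) ≤ #G - 1 :=
    finrank_vectorSpan_faceSimplex hGne ▸ Submodule.finrank_mono vectorSpanBelow_le
  rw [direction_affineSpan, finrank_vectorSpan_face_minkSum h htop hGu,
    mem_buildingClosure_iff h hhat.1 hhat.2.1 hhat.2.2, ← finrank_vectorSpanBelow_eq_iff hGne]
  have := hGne.card_pos
  omega
end

section
/- Let 𝓕 be a building set in the Boolean lattice 2^[r] with [r] ∈ 𝓕, and let w ∈ ℝ^r satisfy w_1 < w_2 < ⋯ < w_r. Then the linear functional x ↦ Σ_{i=1}^r w_i x_i attains its minimum over Δ_𝓕 at a unique point v, namely the point with coordinates v_i = |{F ∈ 𝓕 : min(F) = i}| for i = 1,…,r. -/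
open Finset Pointwise

lemma faceSimplex_subset {r : ℕ} (F : Finset (Fin r)) :
    faceSimplex F ⊆ {y | (∀ i, 0 ≤ y i) ∧ (∀ i, i ∉ F → y i = 0) ∧ ∑ i ∈ F, y i = 1} := by
  apply convexHull_min
  · rintro _ ⟨i, hi, rfl⟩
    have hi' : i ∈ F := by simpa using hi
    refine ⟨fun j => ?_, fun j hj => ?_, ?_⟩
    · simp only [Pi.single_apply]; split <;> norm_num
    · simp only [Pi.single_apply]; rw [if_neg]; rintro rfl; exact hj hi'
    · simp only [Pi.single_apply]
      rw [Finset.sum_ite_eq' F i (fun _ => (1:ℝ))]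
      simp [hi']
  · intro a ha b hb p q hp hq hpq
    refine ⟨fun i => add_nonneg (mul_nonneg hp (ha.1 i)) (mul_nonneg hq (hb.1 i)),
      fun i hi => by simp [ha.2.1 i hi, hb.2.1 i hi], ?_⟩
    simp only [Pi.add_apply, Pi.smul_apply, smul_eq_mul, Finset.sum_add_distrib,
      ← Finset.mul_sum, ha.2.2, hb.2.2, mul_one, hpq]

lemma faceSimplex_min_le {r : ℕ} {F : Finset (Fin r)} (hF : F.Nonempty)
    (w : Fin r → ℝ) (hw : StrictMono w) {y : Fin r → ℝ} (hy : y ∈ faceSimplex F) :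
    w (F.min' hF) ≤ ∑ i, w i * y i ∧
      (∑ i, w i * y i = w (F.min' hF) → y = Pi.single (F.min' hF) 1) := by
  obtain ⟨h0, hout, hsum⟩ := faceSimplex_subset F hy
  set m := F.min' hF with hm
  have hsum' : ∑ i, w i * y i = ∑ i ∈ F, w i * y i := by
    rw [← Finset.sum_subset (Finset.subset_univ F)]
    intro i _ hi; rw [hout i hi, mul_zero]
  have key : ∑ i ∈ F, w i * y i - w m = ∑ i ∈ F, (w i - w m) * y i := by
    simp only [sub_mul, Finset.sum_sub_distrib, ← Finset.mul_sum, hsum, mul_one]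
  have hterm : ∀ i ∈ F, 0 ≤ (w i - w m) * y i := fun i hi =>
    mul_nonneg (sub_nonneg.mpr (hw.monotone (Finset.min'_le F i hi))) (h0 i)
  have hge : w m ≤ ∑ i, w i * y i := by
    rw [hsum']
    nlinarith [Finset.sum_nonneg hterm, key]
  refine ⟨hge, fun heq => ?_⟩
  have hzero : ∑ i ∈ F, (w i - w m) * y i = 0 := by
    rw [← key, ← hsum', heq, sub_self]
  have hez := (Finset.sum_eq_zero_iff_of_nonneg hterm).mp hzero
  have hyz : ∀ i ∈ F, i ≠ m → y i = 0 := by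
    intro i hi hne
    have hlt : w m < w i := hw (lt_of_le_of_ne (Finset.min'_le F i hi) (Ne.symm hne))
    have := hez i hi
    rcases mul_eq_zero.mp this with h | h
    · linarith
    · exact h
  have hym : y m = 1 := by
    rw [← hsum, Finset.sum_eq_single m (fun i hi hne => hyz i hi hne)
      (fun h => absurd (F.min'_mem hF) h)]
  funext i
  rcases eq_or_ne i m with rfl | hne
  · simp [hym]
  · rw [Pi.single_apply, if_neg hne]
    by_cases hi : i ∈ F
    · exact hyz i hi hne
    · exact hout i hi

/-- For a building set `𝓕` in `2^[r]` with `[r] ∈ 𝓕` and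
`w₁ < w₂ < ⋯ < w_r`, the linear functional `x ↦ ∑ wᵢ xᵢ` attains its minimum over
`Δ_𝓕` at the unique point `v` with `vᵢ = #{F ∈ 𝓕 : min F = i}`. -/
theorem statement11 {r : ℕ} (𝓕 : Finset (Finset (Fin r)))
    (hb : BoolBuilding (↑𝓕 : Set (Finset (Fin r)))) (htop : Finset.univ ∈ 𝓕)
    (w : Fin r → ℝ) (hw : StrictMono w) (v : Fin r → ℝ)
    (hv : ∀ i, v i = ((𝓕.filter fun F => F.min = (↑i : WithTop (Fin r))).card : ℝ)) :
    v ∈ minkSum 𝓕 ∧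
      ∀ x ∈ minkSum 𝓕, x ≠ v → (∑ i, w i * v i) < ∑ i, w i * x i := by
  classical
  have hne : ∀ F ∈ 𝓕, F.Nonempty := fun F hF =>
    Finset.nonempty_iff_ne_empty.mpr (hb.1 F (Finset.mem_coe.mpr hF))
  set u : Finset (Fin r) → (Fin r → ℝ) :=
    fun F => if h : F.Nonempty then Pi.single (F.min' h) 1 else 0 with hu_def
  have hu : ∀ F ∈ 𝓕, ∀ i, u F i = if F.min = (↑i : WithTop (Fin r)) then 1 else 0 := by
    intro F hF i
    have h := hne F hF
    have hiff : F.min = (↑i : WithTop (Fin r)) ↔ i = F.min' h := by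
      rw [← Finset.coe_min' h, WithTop.coe_eq_coe, eq_comm]
    simp [hu_def, dif_pos h, Pi.single_apply, hiff]
  have hvsum : (∑ F ∈ 𝓕, u F) = v := by
    funext i
    rw [Finset.sum_apply, Finset.sum_congr rfl (fun F hF => hu F hF i),
      Finset.sum_boole, hv i]
  have humem : ∀ F ∈ 𝓕, u F ∈ faceSimplex F := by
    intro F hF
    have h := hne F hF
    rw [hu_def]; simp only [dif_pos h]
    exact subset_convexHull ℝ _ ⟨F.min' h, by simpa using F.min'_mem h, rfl⟩
  have hvmem : v ∈ minkSum 𝓕 := by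
    rw [← hvsum]
    exact Set.finset_sum_mem_finset_sum 𝓕 faceSimplex u humem
  have hsingle : ∀ mval : Fin r, ∑ i, w i * (Pi.single mval 1 : Fin r → ℝ) i = w mval := by
    intro mval
    simp [Pi.single_apply, mul_ite, Finset.sum_ite_eq']
  set w' : Finset (Fin r) → ℝ := fun F => if h : F.Nonempty then w (F.min' h) else 0 with hw'_def
  have hval : ∑ i, w i * v i = ∑ F ∈ 𝓕, w' F := by
    rw [← hvsum]
    calc ∑ i, w i * (∑ F ∈ 𝓕, u F) i = ∑ i, ∑ F ∈ 𝓕, w i * u F i := by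
          simp [Finset.sum_apply, Finset.mul_sum]
      _ = ∑ F ∈ 𝓕, ∑ i, w i * u F i := Finset.sum_comm
      _ = ∑ F ∈ 𝓕, w' F := by
          refine Finset.sum_congr rfl fun F hF => ?_
          have h := hne F hF
          rw [hw'_def]; simp only [hu_def, dif_pos h]
          exact hsingle _
  refine ⟨hvmem, fun x hx hxne => ?_⟩
  obtain ⟨g, hg, hgs⟩ := (Set.mem_finset_sum 𝓕 faceSimplex x).mp hx
  have hxval : ∑ i, w i * x i = ∑ F ∈ 𝓕, ∑ i, w i * g F i := by
    rw [← hgs]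
    calc ∑ i, w i * (∑ F ∈ 𝓕, g F) i = ∑ i, ∑ F ∈ 𝓕, w i * g F i := by
          simp [Finset.sum_apply, Finset.mul_sum]
      _ = ∑ F ∈ 𝓕, ∑ i, w i * g F i := Finset.sum_comm
  have hle : ∀ F ∈ 𝓕, w' F ≤ ∑ i, w i * g F i := by
    intro F hF
    have h := hne F hF
    rw [hw'_def]; simp only [dif_pos h]
    exact (faceSimplex_min_le h w hw (hg hF)).1
  have hsumle : ∑ i, w i * v i ≤ ∑ i, w i * x i := by
    rw [hval, hxval]; exact Finset.sum_le_sum hle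
  refine lt_of_le_of_ne hsumle fun heq => hxne ?_
  have heq' : ∑ F ∈ 𝓕, w' F = ∑ F ∈ 𝓕, ∑ i, w i * g F i := by
    rw [← hval, ← hxval, heq]
  have hall := (Finset.sum_eq_sum_iff_of_le hle).mp heq'
  have : ∀ F ∈ 𝓕, g F = u F := by
    intro F hF
    have h := hne F hF
    have h2 := (faceSimplex_min_le h w hw (hg hF)).2
    rw [hu_def]; simp only [dif_pos h]
    refine h2 ?_
    have := hall F hF
    rw [hw'_def] at this; simp only [dif_pos h] at this
    exact this.symm
  rw [← hgs, ← hvsum]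
  exact Finset.sum_congr rfl this
end

section
/- Let 𝓕 be a building set in the Boolean lattice 2^[r] with [r] ∈ 𝓕, and let v ∈ ℝ^r be the point with coordinates v_i = |{F ∈ 𝓕 : min(F) = i}|. Then for every G ∈ 𝓕 the equality Σ_{i∈G} v_i = |{F ∈ 𝓕 : F ⊆ G}| holds if and only if G = ⋃{F ∈ 𝓕 : min(F) = i} for some i ∈ [r]. Consequently, among the sets G ∈ 𝓕 ∖ {[r]}, exactly r − 1 of the defining inequalities Σ_{i∈G} x_i ≥ |{F ∈ 𝓕 : F ⊆ G}| of Δ_𝓕 are tight at the vertex v. -/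
open Finset Pointwise

lemma aux_singleton {r : ℕ} {𝓕 : Set (Finset (Fin r))} (hb : BoolBuilding 𝓕) (i : Fin r) :
    ({i} : Finset (Fin r)) ∈ 𝓕 := by
  obtain ⟨k, g, hinj, hgm, -, -, e, he⟩ := hb.2 {i} (by simp)
  rcases Nat.eq_zero_or_pos k with hk | hk
  · subst hk
    have h1 : e.toEquiv.symm ⟨∅, Finset.empty_subset _⟩ = e.toEquiv.symm ⟨{i}, subset_rfl⟩ := by
      funext j; exact j.elim0
    have h2 := congrArg e.toEquiv h1
    rw [Equiv.apply_symm_apply, Equiv.apply_symm_apply] at h2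
    have : (∅ : Finset (Fin r)) = {i} := congrArg Subtype.val h2
    exact absurd this.symm (Finset.singleton_ne_empty i)
  · obtain ⟨hmem, hsub⟩ := hgm ⟨0, hk⟩
    have hne := hb.1 _ hmem
    rcases Finset.subset_singleton_iff.1 hsub with h | h
    · exact absurd h hne
    · exact h ▸ hmem

lemma aux_union {r : ℕ} {𝓕 : Set (Finset (Fin r))} (hb : BoolBuilding 𝓕)
    {F G : Finset (Fin r)} (hF : F ∈ 𝓕) (hG : G ∈ 𝓕) (h : (F ∩ G).Nonempty) :
    F ∪ G ∈ 𝓕 := by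
  classical
  have hXne : F ∪ G ≠ ∅ := by
    obtain ⟨x, hx⟩ := h
    exact Finset.ne_empty_of_mem (Finset.mem_union_left _ (Finset.mem_inter.1 hx).1)
  obtain ⟨k, g, hinj, hgm, hmax, hcov, e, he⟩ := hb.2 (F ∪ G) hXne
  obtain ⟨a, hFa⟩ := hcov F hF Finset.subset_union_left
  obtain ⟨b, hGb⟩ := hcov G hG Finset.subset_union_right
  obtain ⟨x, hx⟩ := h
  have hxF : x ∈ F := (Finset.mem_inter.1 hx).1
  have hxG : x ∈ G := (Finset.mem_inter.1 hx).2
  have hab : a = b := by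
    by_contra hne
    set y : ∀ j : Fin k, {S : Finset (Fin r) // S ⊆ g j} :=
      fun j => if hj : j = a then ⟨{x}, by rw [hj]; exact Finset.singleton_subset_iff.2 (hFa hxF)⟩
        else ⟨∅, Finset.empty_subset _⟩ with hy
    set y' : ∀ j : Fin k, {S : Finset (Fin r) // S ⊆ g j} :=
      fun j => if hj : j = b then ⟨{x}, by rw [hj]; exact Finset.singleton_subset_iff.2 (hGb hxG)⟩
        else ⟨∅, Finset.empty_subset _⟩ with hy'
    have hsup : (e y).1 = {x} := by
      rw [he]
      apply le_antisymm
      · apply Finset.sup_le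
        intro j _
        by_cases hj : j = a <;> simp [hy, hj]
      · have := Finset.le_sup (f := fun j => (y j).1) (Finset.mem_univ a)
        simpa [hy] using this
    have hsup' : (e y').1 = {x} := by
      rw [he]
      apply le_antisymm
      · apply Finset.sup_le
        intro j _
        by_cases hj : j = b <;> simp [hy', hj]
      · have := Finset.le_sup (f := fun j => (y' j).1) (Finset.mem_univ b)
        simpa [hy'] using this
    have heq : e y = e y' := Subtype.ext (hsup.trans hsup'.symm)
    have hyy' := e.injective heq
    have : (y a).1 = (y' a).1 := by rw [hyy']
    simp [hy, hy', hne] at this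
  have hsubst : F ∪ G ⊆ g a := Finset.union_subset hFa (hab ▸ hGb)
  have h2 : g a = F ∪ G := Finset.Subset.antisymm (hgm a).2 hsubst
  exact h2 ▸ (hgm a).1

/-- For a building set `𝓕` in `2^[r]` with `[r] ∈ 𝓕` and the vertex
`v` with `vᵢ = #{F ∈ 𝓕 : min F = i}`: for `G ∈ 𝓕` the inequality `∑_{i∈G} x_i ≥
#{F ∈ 𝓕 : F ⊆ G}` is tight at `v` iff `G = ⋃{F ∈ 𝓕 : min F = i}` for some `i`;
consequently exactly `r - 1` of the sets `G ∈ 𝓕 \ {[r]}` give inequalities tight at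
`v`. -/
theorem statement12 {r : ℕ} (𝓕 : Finset (Finset (Fin r)))
    (hb : BoolBuilding (↑𝓕 : Set (Finset (Fin r)))) (htop : Finset.univ ∈ 𝓕)
    (v : Fin r → ℝ)
    (hv : ∀ i, v i = ((𝓕.filter fun F => F.min = (↑i : WithTop (Fin r))).card : ℝ)) :
    (∀ G ∈ 𝓕,
      ((∑ i ∈ G, v i) = ((𝓕.filter fun F => F ⊆ G).card : ℝ) ↔
        ∃ i : Fin r, G = (𝓕.filter fun F => F.min = (↑i : WithTop (Fin r))).sup id)) ∧
    Set.ncard {G : Finset (Fin r) | G ∈ 𝓕 ∧ G ≠ Finset.univ ∧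
      (∑ i ∈ G, v i) = ((𝓕.filter fun F => F ⊆ G).card : ℝ)} = r - 1 :=  by
  classical
  rcases Nat.eq_zero_or_pos r with hr | hr
  · exfalso
    subst hr
    exact hb.1 _ (Finset.mem_coe.mpr htop) Finset.univ_eq_empty
  haveI : NeZero r := ⟨hr.ne'⟩
  set S : Fin r → Finset (Finset (Fin r)) :=
    fun i => 𝓕.filter fun F => F.min = (↑i : WithTop (Fin r)) with hS
  have hsing : ∀ i : Fin r, ({i} : Finset (Fin r)) ∈ 𝓕 := fun i =>
    Finset.mem_coe.1 (aux_singleton hb i)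
  have hmemS : ∀ i, ({i} : Finset (Fin r)) ∈ S i := fun i =>
    Finset.mem_filter.2 ⟨hsing i, Finset.min_singleton⟩
  have key : ∀ (i : Fin r) (s : Finset (Finset (Fin r))), s.Nonempty →
      (∀ F ∈ s, F ∈ 𝓕 ∧ i ∈ F) → s.sup id ∈ 𝓕 ∧ i ∈ s.sup id := by
    intro i s
    induction s using Finset.induction_on with
    | empty => intro h; exact absurd rfl h.ne_empty
    | @insert a s ha ih =>
      intro _ hall
      have haF := hall a (Finset.mem_insert_self _ _)
      rcases s.eq_empty_or_nonempty with rfl | hs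
      · simpa using haF
      · have ihres := ih hs (fun F hF => hall F (Finset.mem_insert_of_mem hF))
        rw [Finset.sup_insert]
        constructor
        · exact Finset.mem_coe.1 (aux_union hb (Finset.mem_coe.2 haF.1)
            (Finset.mem_coe.2 ihres.1) ⟨i, Finset.mem_inter.2 ⟨haF.2, ihres.2⟩⟩)
        · exact Finset.mem_union_left _ haF.2
  set U : Fin r → Finset (Fin r) := fun i => (S i).sup id with hUdef
  have hU : ∀ i, U i ∈ 𝓕 ∧ i ∈ U i := fun i =>
    key i (S i) ⟨{i}, hmemS i⟩ (fun F hF =>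
      ⟨(Finset.mem_filter.1 hF).1, Finset.mem_of_min (Finset.mem_filter.1 hF).2⟩)
  have hUlb : ∀ i, ∀ j ∈ U i, i ≤ j := by
    intro i j hj
    obtain ⟨F, hFS, hjF⟩ := Finset.mem_sup.1 hj
    have h1 := Finset.min_le hjF
    simp only [id_eq] at h1
    rw [(Finset.mem_filter.1 hFS).2] at h1
    exact_mod_cast h1
  have hUmin : ∀ i, (U i).min = (↑i : WithTop (Fin r)) :=
    fun i => le_antisymm (Finset.min_le (hU i).2)
      (Finset.le_min fun j hj => WithTop.coe_le_coe.2 (hUlb i j hj))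
  have hFsubU : ∀ (i : Fin r) (F : Finset (Fin r)), F ∈ 𝓕 →
      F.min = (↑i : WithTop (Fin r)) → F ⊆ U i := fun i F h1 h2 =>
    Finset.le_sup (f := id) (Finset.mem_filter.2 ⟨h1, h2⟩)
  have hGnonempty : ∀ G ∈ 𝓕, G.Nonempty := fun G hG =>
    Finset.nonempty_iff_ne_empty.2 (hb.1 G (Finset.mem_coe.2 hG))
  have hdisj : ∀ G : Finset (Fin r), ∀ i ∈ G, ∀ j ∈ G, i ≠ j → Disjoint (S i) (S j) := by
    intro G i _ j _ hij
    refine Finset.disjoint_left.2 fun F h1 h2 => hij ?_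
    have e1 := (Finset.mem_filter.1 h1).2
    have e2 := (Finset.mem_filter.1 h2).2
    rw [e1] at e2
    exact_mod_cast e2
  have main : ∀ G ∈ 𝓕,
      ((∑ i ∈ G, v i) = ((𝓕.filter fun F => F ⊆ G).card : ℝ) ↔ ∃ i, G = U i) := by
    intro G hG
    have hsum : (∑ i ∈ G, v i) = ((G.biUnion S).card : ℝ) := by
      rw [Finset.card_biUnion (hdisj G), Nat.cast_sum]
      exact Finset.sum_congr rfl fun i _ => hv i
    have hBA : 𝓕.filter (fun F => F ⊆ G) ⊆ G.biUnion S := by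
      intro F hF
      obtain ⟨hF1, hF2⟩ := Finset.mem_filter.1 hF
      have hFne : F.Nonempty := hGnonempty F hF1
      exact Finset.mem_biUnion.2 ⟨F.min' hFne, hF2 (F.min'_mem hFne),
        Finset.mem_filter.2 ⟨hF1, (Finset.coe_min' hFne).symm⟩⟩
    rw [hsum, Nat.cast_inj]
    constructor
    · intro heq
      have hAB : 𝓕.filter (fun F => F ⊆ G) = G.biUnion S :=
        Finset.eq_of_subset_of_card_le hBA heq.le
      have hsub : ∀ F ∈ 𝓕, ∀ j ∈ G, F.min = (↑j : WithTop (Fin r)) → F ⊆ G := by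
        intro F h1 j hj h2
        have : F ∈ G.biUnion S := Finset.mem_biUnion.2 ⟨j, hj, Finset.mem_filter.2 ⟨h1, h2⟩⟩
        rw [← hAB] at this
        exact (Finset.mem_filter.1 this).2
      refine ⟨G.min' (hGnonempty G hG), Finset.Subset.antisymm ?_ ?_⟩
      · exact hFsubU _ G hG (Finset.coe_min' _).symm
      · exact Finset.sup_le fun F hF => hsub F (Finset.mem_filter.1 hF).1 _
          (G.min'_mem _) (Finset.mem_filter.1 hF).2
    · rintro ⟨i, rfl⟩
      have hcover : (U i).biUnion S ⊆ 𝓕.filter (fun F => F ⊆ U i) := by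
        intro F hF
        obtain ⟨j, hjG, hFS⟩ := Finset.mem_biUnion.1 hF
        obtain ⟨hF𝓕, hFmin⟩ := Finset.mem_filter.1 hFS
        have hjF : j ∈ F := Finset.mem_of_min hFmin
        have hFU : F ∪ U i ∈ 𝓕 := Finset.mem_coe.1 (aux_union hb (Finset.mem_coe.2 hF𝓕)
          (Finset.mem_coe.2 (hU i).1) ⟨j, Finset.mem_inter.2 ⟨hjF, hjG⟩⟩)
        have hmin : (F ∪ U i).min = (↑i : WithTop (Fin r)) := by
          apply le_antisymm
          · exact Finset.min_le (Finset.mem_union_right _ (hU i).2)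
          · apply Finset.le_min
            intro b hb'
            rcases Finset.mem_union.1 hb' with h | h
            · have h1 : j ≤ b := by
                have := Finset.min_le h
                rw [hFmin] at this
                exact_mod_cast this
              exact WithTop.coe_le_coe.2 ((hUlb i j hjG).trans h1)
            · exact WithTop.coe_le_coe.2 (hUlb i b h)
        exact Finset.mem_filter.2 ⟨hF𝓕,
          Finset.subset_union_left.trans (hFsubU i _ hFU hmin)⟩
      exact le_antisymm (Finset.card_le_card hcover) (Finset.card_le_card hBA)
  refine ⟨main, ?_⟩
  have hU0 : U 0 = Finset.univ := by
    have hminuniv : (Finset.univ : Finset (Fin r)).min = ((0 : Fin r) : WithTop (Fin r)) := by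
      apply le_antisymm
      · exact Finset.min_le (Finset.mem_univ _)
      · exact Finset.le_min fun b _ => WithTop.coe_le_coe.2 (Fin.zero_le b)
    exact Finset.eq_univ_of_forall fun x => hFsubU 0 Finset.univ htop hminuniv (Finset.mem_univ x)
  have hUne : ∀ i : Fin r, i ≠ 0 → U i ≠ Finset.univ := by
    intro i hi h
    exact hi (le_antisymm (hUlb i 0 (h ▸ Finset.mem_univ 0)) (Fin.zero_le i))
  have hUinj : Function.Injective U := by
    intro i j h
    have h1 := hUmin i
    rw [h, hUmin j] at h1
    exact_mod_cast h1.symm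
  have hset : {G : Finset (Fin r) | G ∈ 𝓕 ∧ G ≠ Finset.univ ∧
      (∑ i ∈ G, v i) = ((𝓕.filter fun F => F ⊆ G).card : ℝ)} =
      ↑((Finset.univ.erase (0 : Fin r)).image U) := by
    ext G
    simp only [Set.mem_setOf_eq, Finset.coe_image, Set.mem_image, Finset.mem_coe]
    constructor
    · rintro ⟨h1, h2, h3⟩
      obtain ⟨i, rfl⟩ := (main G h1).1 h3
      have hi : i ≠ 0 := fun h => h2 (h ▸ hU0)
      exact ⟨i, Finset.mem_coe.2 (Finset.mem_erase.2 ⟨hi, Finset.mem_univ i⟩), rfl⟩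
    · rintro ⟨i, hi, rfl⟩
      have hi' := (Finset.mem_erase.1 (Finset.mem_coe.1 hi)).1
      exact ⟨(hU i).1, hUne i hi', (main _ (hU i).1).2 ⟨i, rfl⟩⟩
  rw [hset, Set.ncard_coe_finset, Finset.card_image_of_injective _ hUinj,
    Finset.card_erase_of_mem (Finset.mem_univ _), Finset.card_univ, Fintype.card_fin]
end

section
/- Let M be a loopless matroid on [n] and let 𝓖 be a building set in the lattice of flats L_M of M. Then a vector w ∈ ℝ^n lies in the Bergman fan B̃(M) if and only if there exist a subset S of 𝓖 ∪ {[n]} that is nested with respect to the building set 𝓖 ∪ {[n]}, nonnegative reals c_G for G ∈ S, and a real number λ, such that w = λ·(1,…,1) + Σ_{G∈S} c_G e_G, where e_G denotes the 0/1 indicator vector of the flat G. -/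
open Finset Pointwise

/-!
A vector `w` lies in the Bergman fan exactly when every superlevel set `{x | t < w x}` is a
flat: a circuit on which the minimum `w k` is attained only once leaves exactly `k` outside
`{x | w k < w x}`.

Forward direction: up to `λ·(1,…,1)`, `w` is the combination of the indicator vectors of the
chain of proper flats `{x | v < w x}`, `v` running over the values of `w`, with the gaps between
consecutive values as coefficients. Because `𝓖` is a building set, every flat is the disjoint
union of its `𝓖`-factors (the maximal members of `𝓖` below it); the factors of the flats of a
chain form a nested set, which carries the same combination.

Backward direction: the members of a nested set containing a given point form a chain, so
`{x | s < ∑ c_G e_G x}` is the union of an antichain of the nested set. Injectivity of the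
building-set isomorphism at the join of such an antichain forces each factor of the join to be a
member of the antichain, so the join is just the union, which is therefore a flat.

That the factors of a flat partition it rests on looplessness: the closure of a point is then an
atom of the lattice of flats.
-/

theorem Finset.sup_filter_maximal_id {α : Type*} [SemilatticeSup α] [OrderBot α]
    (s : Finset α) [DecidablePred (Maximal (· ∈ s))] :
    (s.filter (Maximal (· ∈ s))).sup id = s.sup id :=
  (sup_mono (filter_subset _ _)).antisymm <| Finset.sup_le fun a ha => by
    obtain ⟨b, hab, hb⟩ := s.exists_le_maximal ha
    exact le_sup_of_le (mem_filter.2 ⟨hb.1, hb⟩) hab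

section nextAbove

variable {α : Type*} [LinearOrder α]

noncomputable def nextAbove (D : Finset α) (v : α) : α :=
  if h : (D.filter (v < ·)).Nonempty then (D.filter (v < ·)).min' h else v

theorem le_nextAbove (D : Finset α) (v : α) : v ≤ nextAbove D v := by
  unfold nextAbove
  split_ifs with h
  · exact (le_min' _ _ _ fun u hu => (mem_filter.1 hu).2.le)
  · exact le_rfl

theorem nextAbove_eq {D : Finset α} {v x : α} (hx : x ∈ D) (hvx : v < x)
    (h : ∀ u ∈ D, v < u → x ≤ u) : nextAbove D v = x := by
  have hne : (D.filter (v < ·)).Nonempty := ⟨x, mem_filter.2 ⟨hx, hvx⟩⟩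
  rw [nextAbove, dif_pos hne]
  exact le_antisymm (min'_le _ _ (mem_filter.2 ⟨hx, hvx⟩))
    (le_min' _ _ _ fun u hu => h u (mem_filter.1 hu).1 (mem_filter.1 hu).2)

theorem sum_filter_lt_nextAbove_sub [AddCommGroup α] {D : Finset α} {m : α} (hm : m ∈ D)
    (hmin : ∀ u ∈ D, m ≤ u) {x : α} (hx : x ∈ D) :
    ∑ v ∈ D with v < x, (nextAbove D v - v) = x - m := by
  induction hk : #(D.filter (· < x)) using Nat.strong_induction_on generalizing x with
  | _ k ih =>
  rcases (D.filter (· < x)).eq_empty_or_nonempty with h | h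
  · have hxm : x = m := le_antisymm (le_of_not_gt fun hmx =>
      (eq_empty_iff_forall_notMem.1 h m) (mem_filter.2 ⟨hm, hmx⟩)) (hmin x hx)
    rw [h, sum_empty, hxm, sub_self]
  · set p := (D.filter (· < x)).max' h
    have hp : p ∈ D ∧ p < x := mem_filter.1 (max'_mem _ h)
    have hle : ∀ u ∈ D, u < x → u ≤ p := fun u hu hux => le_max' _ u (mem_filter.2 ⟨hu, hux⟩)
    have hsplit : D.filter (· < x) = insert p (D.filter (· < p)) := by
      ext u
      simp only [mem_filter, mem_insert]
      constructor
      · rintro ⟨huD, hux⟩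
        exact (hle u huD hux).lt_or_eq.elim (fun h => Or.inr ⟨huD, h⟩) Or.inl
      · rintro (rfl | ⟨huD, hup⟩)
        exacts [hp, ⟨huD, hup.trans hp.2⟩]
    have hnext : nextAbove D p = x :=
      nextAbove_eq hx hp.2 fun u huD hpu => le_of_not_gt fun hux => (hle u huD hux).not_gt hpu
    have hlt : #(D.filter (· < p)) < k := by
      rw [← hk, hsplit, card_insert_of_notMem (by simp)]
      omega
    rw [hsplit, sum_insert (by simp), ih _ hlt hp.1 rfl, hnext]
    abel

theorem exists_forall_sub_eq_sum_nextAbove [AddCommGroup α] {ι : Type*} [Fintype ι]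
    (w : ι → α) : ∃ m, ∀ j, w j - m =
      ∑ v ∈ univ.image w with v < w j, (nextAbove (univ.image w) v - v) := by
  rcases isEmpty_or_nonempty ι with hι | ⟨⟨j₀⟩⟩
  · exact ⟨0, isEmptyElim⟩
  obtain ⟨j₁, -, hj₁⟩ := exists_min_image univ w ⟨j₀, mem_univ _⟩
  exact ⟨w j₁, fun j => (sum_filter_lt_nextAbove_sub (mem_image_of_mem w (mem_univ j₁))
    (by simpa using hj₁) (mem_image_of_mem w (mem_univ j))).symm⟩

end nextAbove

open scoped Classical in
/-- The `𝓖`-factors of `X`. -/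
noncomputable def maximalBelow {n : ℕ} (𝓖 : Set (Finset (Fin n))) (X : Finset (Fin n)) :
    Finset (Finset (Fin n)) :=
  univ.filter (Maximal fun G => G ∈ 𝓖 ∧ G ⊆ X)

section maximalBelow

variable {n : ℕ} {𝓖 : Set (Finset (Fin n))} {G X : Finset (Fin n)}

theorem mem_maximalBelow : G ∈ maximalBelow 𝓖 X ↔ Maximal (fun G => G ∈ 𝓖 ∧ G ⊆ X) G := by
  simp [maximalBelow]

theorem exists_subset_mem_maximalBelow (hG : G ∈ 𝓖) (hGX : G ⊆ X) :
    ∃ H ∈ maximalBelow 𝓖 X, G ⊆ H := by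
  obtain ⟨H, hGH, hH⟩ := (Set.toFinite {G | G ∈ 𝓖 ∧ G ⊆ X}).exists_le_maximal ⟨hG, hGX⟩
  exact ⟨H, mem_maximalBelow.2 hH, hGH⟩

theorem subset_of_mem_maximalBelow (hG : G ∈ maximalBelow 𝓖 X) : G ⊆ X :=
  (mem_maximalBelow.1 hG).1.2

theorem mem_of_mem_maximalBelow (hG : G ∈ maximalBelow 𝓖 X) : G ∈ 𝓖 :=
  (mem_maximalBelow.1 hG).1.1

end maximalBelow

namespace FinMatroid

variable {n r : ℕ} {M : FinMatroid n r} {𝓖 : Set (Finset (Fin n))}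

def toMatroid (M : FinMatroid n r) : Matroid (Fin n) :=
  Matroid.ofIsBaseOfFinite Set.finite_univ (fun B => ∃ B' ∈ M.bases, (B' : Set (Fin n)) = B)
    (let ⟨B, hB⟩ := M.bases_nonempty; ⟨B, B, hB, rfl⟩)
    (by
      rintro _ _ ⟨B₁, hB₁, rfl⟩ ⟨B₂, hB₂, rfl⟩ a ha
      obtain ⟨b, hb, hex⟩ := M.exchange B₁ hB₁ B₂ hB₂ a (by simpa using ha)
      exact ⟨b, by simpa using hb, _, hex, by simp [coe_erase]⟩)
    (fun _ _ => Set.subset_univ _)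

@[simp] theorem toMatroid_E : M.toMatroid.E = Set.univ := rfl

theorem toMatroid_indep_iff {I : Finset (Fin n)} : M.toMatroid.Indep I ↔ M.Indep I := by
  rw [Matroid.indep_iff]
  constructor
  · rintro ⟨_, ⟨B, hB, rfl⟩, hIB⟩
    exact ⟨B, hB, by exact_mod_cast hIB⟩
  · rintro ⟨B, hB, hIB⟩
    exact ⟨B, ⟨B, hB, rfl⟩, by exact_mod_cast hIB⟩

theorem toMatroid_isCircuit_iff {C : Finset (Fin n)} :
    M.toMatroid.IsCircuit C ↔ M.IsCircuit C := by
  rw [Matroid.isCircuit_iff_dep_forall_sdiff_singleton_indep, Matroid.dep_iff, toMatroid_E]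
  simp only [← coe_erase, toMatroid_indep_iff, mem_coe, Set.subset_univ, and_true]
  constructor
  · rintro ⟨hC, h⟩
    refine ⟨hC, fun D hD => ?_⟩
    obtain ⟨e, he, hDe⟩ := ssubset_iff_exists_subset_erase.1 hD
    obtain ⟨B, hB, hCB⟩ := h e he
    exact ⟨B, hB, hDe.trans hCB⟩
  · rintro ⟨hC, h⟩
    exact ⟨hC, fun e he => h _ (erase_ssubset he)⟩

theorem toMatroid_isFlat_iff {F : Finset (Fin n)} : M.toMatroid.IsFlat F ↔ M.IsFlat F := by
  constructor
  · intro hF C hC hCF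
    obtain ⟨e, he⟩ := card_eq_one.1 hCF
    have heC : e ∈ C := (mem_sdiff.1 (he ▸ mem_singleton_self e)).1
    have heF : e ∉ F := (mem_sdiff.1 (he ▸ mem_singleton_self e)).2
    have hsub : (C : Set (Fin n)) \ {e} ⊆ F := by
      intro x ⟨hxC, hxe⟩
      by_contra hxF
      exact hxe (by simpa [he] using mem_sdiff.2 ⟨hxC, hxF⟩)
    apply heF
    rw [← mem_coe, ← hF.closure]
    exact M.toMatroid.closure_subset_closure hsub
      ((toMatroid_isCircuit_iff.2 hC).mem_closure_sdiff_singleton_of_mem heC)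
  · intro hF
    refine Matroid.isFlat_iff_closure_eq.2 (subset_antisymm (fun e he => ?_)
      (M.toMatroid.subset_closure _ (by simp)))
    by_contra heF
    obtain ⟨C, hCsub, hC, heC⟩ := (Matroid.mem_closure_iff_exists_isCircuit heF).1 he
    lift C to Finset (Fin n) using C.toFinite
    refine hF C (toMatroid_isCircuit_iff.1 hC) (card_eq_one.2 ⟨e, ?_⟩)
    ext x
    simp only [mem_sdiff, mem_singleton]
    refine ⟨fun ⟨hxC, hxF⟩ => ?_, fun hx => hx ▸ ⟨heC, heF⟩⟩
    simpa [hxF] using hCsub hxC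

theorem coe_closure (S : Finset (Fin n)) :
    (M.closure S : Set (Fin n)) = M.toMatroid.closure S := by
  classical
  ext x
  simp only [FinMatroid.closure, coe_filter, mem_univ, true_and, Set.mem_ofPred_eq,
    Matroid.mem_closure_iff_forall_mem_isFlat _ (show (S : Set (Fin n)) ⊆ M.toMatroid.E by simp)]
  constructor
  · intro h F hF hSF
    lift F to Finset (Fin n) using F.toFinite
    exact h F (toMatroid_isFlat_iff.1 hF) (by exact_mod_cast hSF)
  · intro h F hF hSF
    exact h F (toMatroid_isFlat_iff.2 hF) (by exact_mod_cast hSF)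

theorem isFlat_univ : M.IsFlat univ := by
  intro C _ h
  rw [sdiff_eq_empty_iff_subset.2 (subset_univ C)] at h
  simp at h

theorem isFlat_empty (hM : M.Loopless) : M.IsFlat ∅ := by
  intro C hC h
  obtain ⟨x, hx⟩ := card_eq_one.1 h
  rw [sdiff_empty] at hx
  exact hC.1 (hx ▸ hM x)

theorem subset_closure (S : Finset (Fin n)) : S ⊆ M.closure S := by
  rw [← coe_subset, coe_closure]
  exact M.toMatroid.subset_closure _ (by simp)

theorem closure_subset_of_isFlat {S F : Finset (Fin n)} (hF : M.IsFlat F) (hSF : S ⊆ F) :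
    M.closure S ⊆ F := by
  classical
  intro i hi
  exact (mem_filter.1 hi).2 F hF hSF

theorem isFlat_closure (S : Finset (Fin n)) : M.IsFlat (M.closure S) := by
  rw [← toMatroid_isFlat_iff, coe_closure]
  exact Matroid.isFlat_closure _

theorem closure_mono {S T : Finset (Fin n)} (h : S ⊆ T) : M.closure S ⊆ M.closure T :=
  closure_subset_of_isFlat (isFlat_closure T) (h.trans (subset_closure T))

theorem IsFlat.closure_eq {F : Finset (Fin n)} (hF : M.IsFlat F) : M.closure F = F :=
  (closure_subset_of_isFlat hF subset_rfl).antisymm (subset_closure F)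

theorem eq_closure_singleton_of_isFlat (hM : M.Loopless) {B : Finset (Fin n)} {j k : Fin n}
    (hB : M.IsFlat B) (hBj : B ⊆ M.closure {j}) (hk : k ∈ B) : B = M.closure {j} := by
  refine hBj.antisymm (closure_subset_of_isFlat hB (singleton_subset_iff.2 ?_))
  have hk_nonloop : M.toMatroid.IsNonloop k := by
    simpa [Matroid.indep_singleton] using (toMatroid_indep_iff (M := M)).2 (hM k)
  have hkj : k ∈ M.toMatroid.closure {j} := by
    simpa [← mem_coe, coe_closure] using hBj hk
  have hjk := hk_nonloop.mem_closure_singleton hkj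
  rw [← coe_singleton, ← coe_closure] at hjk
  exact closure_subset_of_isFlat hB (singleton_subset_iff.2 hk) hjk

theorem existsUnique_mem_of_orderIso (hM : M.Loopless) {X : Finset (Fin n)} (hX : M.IsFlat X)
    {k : ℕ} {g : Fin k → Finset (Fin n)} (hg : ∀ i, M.IsFlat (g i))
    (e : (∀ i, {F : Finset (Fin n) // M.IsFlat F ∧ F ⊆ g i}) ≃o
      {F : Finset (Fin n) // M.IsFlat F ∧ F ⊆ X})
    (he : ∀ y, (e y).1 = M.closure (univ.sup fun i => (y i).1)) {j : Fin n} (hj : j ∈ X) :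
    ∃! i, j ∈ g i := by
  classical
  have hA : M.IsFlat (M.closure {j}) := isFlat_closure _
  have hjA : j ∈ M.closure {j} := subset_closure _ (mem_singleton_self j)
  refine existsUnique_of_exists_of_unique ?_ fun i i' hi hi' => ?_
  · set y := e.symm ⟨_, hA, closure_subset_of_isFlat hX (singleton_subset_iff.2 hj)⟩
    have hyA : M.closure (univ.sup fun i => (y i).1) = M.closure {j} := by
      rw [← he, e.apply_symm_apply]
    obtain ⟨i, hi⟩ : ∃ i, (y i).1.Nonempty := by
      by_contra! h
      rw [(Finset.sup_eq_bot_iff _ _).2 fun i _ => h i, bot_eq_empty,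
        (isFlat_empty hM).closure_eq] at hyA
      simp [← hyA] at hjA
    have hyi : (y i).1 = M.closure {j} := by
      refine eq_closure_singleton_of_isFlat hM (y i).2.1 ?_ hi.choose_spec
      calc (y i).1 ⊆ univ.sup fun i => (y i).1 := le_sup (f := fun i => (y i).1) (mem_univ i)
        _ ⊆ _ := subset_closure _
        _ = _ := hyA
    exact ⟨i, (y i).2.2 (hyi ▸ hjA)⟩
  -- Tuples concentrated on the coordinates `i` and `i'` would both be sent to `closure {j}`.
  · have single : ∀ l, j ∈ g l → ∃ z : ∀ i, {F : Finset (Fin n) // M.IsFlat F ∧ F ⊆ g i},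
        (z l).1 = M.closure {j} ∧ (∀ i ≠ l, (z i).1 = ∅) ∧ (e z).1 = M.closure {j} := by
      intro l hl
      have hAl := closure_subset_of_isFlat (hg l) (singleton_subset_iff.2 hl)
      refine ⟨fun i => if h : i = l then ⟨_, hA, h ▸ hAl⟩ else ⟨∅, isFlat_empty hM,
        empty_subset _⟩, by simp, fun i hi => by simp [hi], ?_⟩
      rw [he]
      convert hA.closure_eq using 2
      refine le_antisymm (Finset.sup_le fun i _ => ?_) (le_sup_of_le (mem_univ l) (by simp))
      by_cases h : i = l <;> simp [h]
    obtain ⟨z, hz, -, hez⟩ := single i hi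
    obtain ⟨z', hz', hz'0, hez'⟩ := single i' hi'
    have hzz' : z = z' := e.injective (Subtype.ext (hez.trans hez'.symm))
    by_contra hii'
    have : M.closure {j} = ∅ := by rw [← hz, hzz', hz'0 i hii']
    simp [this] at hjA

theorem eq_of_closure_sup_eq_of_orderIso {X : Finset (Fin n)} {k : ℕ}
    {g : Fin k → Finset (Fin n)} (hg : ∀ i, M.IsFlat (g i))
    (e : (∀ i, {F : Finset (Fin n) // M.IsFlat F ∧ F ⊆ g i}) ≃o
      {F : Finset (Fin n) // M.IsFlat F ∧ F ⊆ X})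
    (he : ∀ y, (e y).1 = M.closure (univ.sup fun i => (y i).1))
    (z : ∀ i, {F : Finset (Fin n) // M.IsFlat F ∧ F ⊆ g i})
    (hz : M.closure (univ.sup fun i => (z i).1) = X) (i : Fin k) : (z i).1 = g i := by
  let γ : ∀ i, {F : Finset (Fin n) // M.IsFlat F ∧ F ⊆ g i} := fun i => ⟨g i, hg i, subset_rfl⟩
  have hzγ : e z ≤ e γ := e.monotone fun i => (z i).2.2
  have hγz : (e γ).1 ⊆ (e z).1 := by
    rw [he z, hz]
    exact (e γ).2.2
  have : e z = e γ := hzγ.antisymm hγz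
  exact congrArg Subtype.val (congrFun (e.injective this) i)

theorem IsFlatBuilding.exists_orderIso (h𝓖 : M.IsFlatBuilding 𝓖) {X : Finset (Fin n)}
    (hX : M.IsFlat X) (hX₀ : X.Nonempty) :
    ∃ (k : ℕ) (g : Fin k → Finset (Fin n)), (∀ G, G ∈ maximalBelow 𝓖 X ↔ ∃ i, g i = G) ∧
      ∃ e : (∀ i, {F : Finset (Fin n) // M.IsFlat F ∧ F ⊆ g i}) ≃o
          {F : Finset (Fin n) // M.IsFlat F ∧ F ⊆ X},
        ∀ y, (e y).1 = M.closure (univ.sup fun i => (y i).1) := by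
  obtain ⟨k, g, -, hgmem, hgmax, hgsub, e, he⟩ := h𝓖.2 X hX hX₀.ne_empty
  refine ⟨k, g, fun G => ⟨fun hG => ?_, ?_⟩, e, he⟩
  · have hG := mem_maximalBelow.1 hG
    obtain ⟨i, hi⟩ := hgsub G hG.1.1 hG.1.2
    exact ⟨i, hG.eq_of_ge (hgmem i) hi⟩
  · rintro ⟨i, rfl⟩
    exact mem_maximalBelow.2 ⟨hgmem i, fun H hH hgH => (hgmax i H hH.1 hH.2 hgH).ge⟩

theorem IsFlatBuilding.isFlat_of_mem (h𝓖 : M.IsFlatBuilding 𝓖) {G : Finset (Fin n)}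
    (hG : G ∈ 𝓖) : M.IsFlat G :=
  (h𝓖.1 G hG).1

theorem IsFlatBuilding.existsUnique_mem_maximalBelow (hM : M.Loopless)
    (h𝓖 : M.IsFlatBuilding 𝓖) {X : Finset (Fin n)} (hX : M.IsFlat X) {j : Fin n} (hj : j ∈ X) :
    ∃! G, G ∈ maximalBelow 𝓖 X ∧ j ∈ G := by
  obtain ⟨k, g, hg, e, he⟩ := h𝓖.exists_orderIso hX ⟨j, hj⟩
  have hgflat i := h𝓖.isFlat_of_mem (mem_of_mem_maximalBelow ((hg _).2 ⟨i, rfl⟩))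
  obtain ⟨i, hi, huniq⟩ := existsUnique_mem_of_orderIso hM hX hgflat e he hj
  refine ⟨g i, ⟨(hg _).2 ⟨i, rfl⟩, hi⟩, ?_⟩
  rintro _ ⟨hG, hjG⟩
  obtain ⟨i', rfl⟩ := (hg _).1 hG
  rw [huniq i' hjG]

theorem IsFlatBuilding.eq_of_closure_sup_eq (h𝓖 : M.IsFlatBuilding 𝓖) {X : Finset (Fin n)}
    (hX : M.IsFlat X) {Z : Finset (Fin n) → Finset (Fin n)}
    (hZ : ∀ G ∈ maximalBelow 𝓖 X, M.IsFlat (Z G) ∧ Z G ⊆ G)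
    (hZX : M.closure ((maximalBelow 𝓖 X).sup Z) = X) {G : Finset (Fin n)}
    (hG : G ∈ maximalBelow 𝓖 X) : Z G = G := by
  classical
  obtain ⟨k, g, hg, e, he⟩ :=
    h𝓖.exists_orderIso hX (nonempty_of_ne_empty (h𝓖.1 G (mem_of_mem_maximalBelow hG)).2 |>.mono
      (subset_of_mem_maximalBelow hG))
  have hgmem i : g i ∈ maximalBelow 𝓖 X := (hg _).2 ⟨i, rfl⟩
  have hgflat i := h𝓖.isFlat_of_mem (mem_of_mem_maximalBelow (hgmem i))
  have himage : maximalBelow 𝓖 X = univ.image g := by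
    ext G
    simp [hg]
  obtain ⟨i, rfl⟩ := (hg G).1 hG
  refine eq_of_closure_sup_eq_of_orderIso hgflat e he (fun i => ⟨Z (g i), hZ _ (hgmem i)⟩) ?_ i
  rw [← hZX, himage, sup_image]
  rfl

theorem IsFlatBuilding.sum_indVec_maximalBelow (hM : M.Loopless) (h𝓖 : M.IsFlatBuilding 𝓖)
    {X : Finset (Fin n)} (hX : M.IsFlat X) (j : Fin n) :
    ∑ G ∈ maximalBelow 𝓖 X, indVec G j = indVec X j := by
  classical
  simp only [indVec, sum_boole]
  by_cases hj : j ∈ X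
  · obtain ⟨G, hG, huniq⟩ := h𝓖.existsUnique_mem_maximalBelow hM hX hj
    rw [if_pos hj, card_eq_one.2 ⟨G, ?_⟩, Nat.cast_one]
    ext H
    simp only [mem_filter, mem_singleton]
    exact ⟨fun hH => huniq H hH, fun h => h ▸ hG⟩
  · rw [if_neg hj, card_eq_zero.2, Nat.cast_zero]
    exact filter_false_of_mem fun G hG hjG => hj (subset_of_mem_maximalBelow hG hjG)

theorem IsFlatBuilding.disjoint_of_closure_union_notMem (hM : M.Loopless)
    (h𝓖 : M.IsFlatBuilding 𝓖) {G G' : Finset (Fin n)} (hG : G ∈ 𝓖) (hG' : G' ∈ 𝓖)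
    (hGG' : M.closure (G ∪ G') ∉ 𝓖) : Disjoint G G' := by
  rw [disjoint_left]
  intro j hj hj'
  set Y := M.closure (G ∪ G')
  have hY : M.IsFlat Y := isFlat_closure _
  obtain ⟨H, hH, hGH⟩ :=
    exists_subset_mem_maximalBelow hG (subset_union_left.trans (subset_closure _))
  obtain ⟨H', hH', hGH'⟩ :=
    exists_subset_mem_maximalBelow hG' (subset_union_right.trans (subset_closure _))
  have hjY : j ∈ Y := subset_closure _ (mem_union_left _ hj)
  obtain ⟨_, -, huniq⟩ := h𝓖.existsUnique_mem_maximalBelow hM hY hjY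
  have hHH' : H = H' := (huniq H ⟨hH, hGH hj⟩).trans (huniq H' ⟨hH', hGH' hj'⟩).symm
  subst hHH'
  have hYH : Y = H := (closure_subset_of_isFlat (h𝓖.isFlat_of_mem (mem_of_mem_maximalBelow hH))
    (union_subset hGH hGH')).antisymm (subset_of_mem_maximalBelow hH)
  exact hGG' (hYH ▸ mem_of_mem_maximalBelow hH)

theorem IsNested.closure_sup_notMem {𝓗 : Set (Finset (Fin n))} {S T : Finset (Finset (Fin n))}
    (hS : M.IsNested 𝓗 S) (hTS : T ⊆ S) (hT₂ : 2 ≤ #T)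
    (hT : IsAntichain (· ⊆ ·) (T : Set (Finset (Fin n)))) : M.closure (T.sup id) ∉ 𝓗 :=
  hS.2 T hTS hT₂ fun _ hA _ hB hAB => ⟨hT hA hB hAB, hT hB hA hAB.symm⟩

theorem IsNested.subset_or_subset_of_mem (hM : M.Loopless) (h𝓖 : M.IsFlatBuilding 𝓖)
    {S : Finset (Finset (Fin n))} (hS : M.IsNested (𝓖 ∪ {univ}) S) {G G' : Finset (Fin n)}
    (hG : G ∈ S) (hG' : G' ∈ S) {x : Fin n} (hx : x ∈ G) (hx' : x ∈ G') :
    G ⊆ G' ∨ G' ⊆ G := by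
  classical
  by_contra! h
  have hG𝓖 : G ∈ 𝓖 := (hS.1 hG).resolve_right fun hu => h.2 (by simp [Set.mem_singleton_iff.1 hu])
  have hG'𝓖 : G' ∈ 𝓖 :=
    (hS.1 hG').resolve_right fun hu => h.1 (by simp [Set.mem_singleton_iff.1 hu])
  have hGG' : G ≠ G' := fun hGG' => h.1 hGG'.subset
  have hpair := hS.closure_sup_notMem (T := {G, G'}) (insert_subset hG (singleton_subset_iff.2 hG'))
    (card_pair hGG').ge (by rw [coe_pair]; exact Set.pairwise_pair.2 fun _ => ⟨h.1, h.2⟩)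
  rw [sup_insert, sup_singleton, id] at hpair
  exact disjoint_left.1 (h𝓖.disjoint_of_closure_union_notMem hM hG𝓖 hG'𝓖 fun h => hpair (Or.inl h))
    hx hx'

theorem IsNested.maximalBelow_closure_sup_subset (hM : M.Loopless) (h𝓖 : M.IsFlatBuilding 𝓖)
    {S T : Finset (Finset (Fin n))} (hS : M.IsNested (𝓖 ∪ {univ}) S) (hTS : T ⊆ S)
    (hT𝓖 : ∀ G ∈ T, G ∈ 𝓖) (hT : IsAntichain (· ⊆ ·) (T : Set (Finset (Fin n)))) :
    maximalBelow 𝓖 (M.closure (T.sup id)) ⊆ T := by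
  classical
  set Y := M.closure (T.sup id)
  have hY : M.IsFlat Y := isFlat_closure _
  set Z : Finset (Fin n) → Finset (Fin n) := fun H => M.closure ((T.filter (· ⊆ H)).sup id)
  have hZ : ∀ H ∈ maximalBelow 𝓖 Y, M.IsFlat (Z H) ∧ Z H ⊆ H := fun H hH =>
    ⟨isFlat_closure _, closure_subset_of_isFlat (h𝓖.isFlat_of_mem (mem_of_mem_maximalBelow hH))
      (Finset.sup_le fun G hG => (mem_filter.1 hG).2)⟩
  have hZY : M.closure ((maximalBelow 𝓖 Y).sup Z) = Y := by
    refine (closure_subset_of_isFlat hY (Finset.sup_le fun H hH =>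
      (hZ H hH).2.trans (subset_of_mem_maximalBelow hH))).antisymm
      (closure_mono (Finset.sup_le fun G hG => ?_))
    obtain ⟨H, hH, hGH⟩ := exists_subset_mem_maximalBelow (hT𝓖 G hG)
      ((le_sup (f := id) hG).trans (subset_closure _))
    calc G ⊆ Z H := (le_sup (f := id) (mem_filter.2 ⟨hG, hGH⟩)).trans (subset_closure _)
      _ ⊆ _ := le_sup (f := Z) hH
  intro H hH
  have hZH : M.closure ((T.filter (· ⊆ H)).sup id) = H := h𝓖.eq_of_closure_sup_eq hY hZ hZY hH
  have hH𝓖 := mem_of_mem_maximalBelow hH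
  rcases Nat.lt_or_ge #(T.filter (· ⊆ H)) 2 with hcard | hcard
  · obtain ⟨G, hG⟩ := card_le_one_iff_subset_singleton.1 (Nat.lt_succ_iff.1 hcard)
    rcases subset_singleton_iff.1 hG with h | h
    · rw [h, sup_empty, bot_eq_empty, (isFlat_empty hM).closure_eq] at hZH
      exact absurd hZH.symm (h𝓖.1 H hH𝓖).2
    · have hGT := (mem_filter.1 (h ▸ mem_singleton_self G : G ∈ T.filter (· ⊆ H))).1
      rw [h, sup_singleton, id, (h𝓖.isFlat_of_mem (hT𝓖 G hGT)).closure_eq] at hZH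
      exact hZH ▸ hGT
  · refine absurd ?_ (hS.closure_sup_notMem ((filter_subset _ _).trans hTS) hcard
      (hT.subset (coe_subset.2 (filter_subset _ _))))
    rw [hZH]
    exact Or.inl hH𝓖

theorem IsNested.isFlat_sup (hM : M.Loopless) (h𝓖 : M.IsFlatBuilding 𝓖)
    {S T : Finset (Finset (Fin n))} (hS : M.IsNested (𝓖 ∪ {univ}) S) (hTS : T ⊆ S)
    (hT : IsAntichain (· ⊆ ·) (T : Set (Finset (Fin n)))) : M.IsFlat (T.sup id) := by
  by_cases hu : univ ∈ T
  · rw [(subset_univ _).antisymm (le_sup (f := id) hu)]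
    exact isFlat_univ
  have hT𝓖 : ∀ G ∈ T, G ∈ 𝓖 := fun G hG =>
    (hS.1 (hTS hG)).resolve_right fun h => hu (Set.mem_singleton_iff.1 h ▸ hG)
  have hsub := hS.maximalBelow_closure_sup_subset hM h𝓖 hTS hT𝓖 hT
  suffices M.closure (T.sup id) ⊆ T.sup id by
    rw [← this.antisymm (subset_closure _)]
    exact isFlat_closure _
  intro j hj
  obtain ⟨H, ⟨hH, hjH⟩, -⟩ := h𝓖.existsUnique_mem_maximalBelow hM (isFlat_closure _) hj
  exact mem_sup.2 ⟨H, hsub hH, hjH⟩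

theorem IsNested.filter_lt_sum_eq_sup (hM : M.Loopless) (h𝓖 : M.IsFlatBuilding 𝓖)
    {S : Finset (Finset (Fin n))} (hS : M.IsNested (𝓖 ∪ {univ}) S)
    {c : Finset (Fin n) → ℝ} (hc : ∀ G ∈ S, 0 ≤ c G) {s : ℝ} (hs : 0 ≤ s) :
    univ.filter (fun x => s < ∑ G ∈ S with x ∈ G, c G) =
      (S.filter fun G => s < ∑ H ∈ S with G ⊆ H, c H).sup id := by
  classical
  ext x
  simp only [mem_filter, mem_univ, true_and, mem_sup, id]
  constructor
  · intro hx
    have hne : (S.filter (x ∈ ·)).Nonempty := by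
      rw [nonempty_iff_ne_empty]
      intro h
      rw [h, sum_empty] at hx
      linarith
    -- The members of `S` containing `x` form a chain; its least element carries the same sum.
    obtain ⟨G, hG⟩ := exists_minimal hne
    obtain ⟨hGS, hxG⟩ := mem_filter.1 hG.1
    refine ⟨G, ⟨hGS, ?_⟩, hxG⟩
    convert hx using 2
    ext H
    simp only [mem_filter]
    refine and_congr_right fun hH => ⟨fun hGH => hGH hxG, fun hxH => ?_⟩
    exact (hS.subset_or_subset_of_mem hM h𝓖 hGS hH hxG hxH).elim id
      fun hHG => hG.2 (mem_filter.2 ⟨hH, hxH⟩) hHG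
  · rintro ⟨G, ⟨hGS, hsG⟩, hxG⟩
    refine hsG.trans_le (sum_le_sum_of_subset_of_nonneg (fun H hH => ?_)
      fun H hH _ => hc H (mem_filter.1 hH).1)
    exact mem_filter.2 ⟨(mem_filter.1 hH).1, (mem_filter.1 hH).2 hxG⟩

theorem IsNested.isFlat_filter_lt_sum (hM : M.Loopless) (h𝓖 : M.IsFlatBuilding 𝓖)
    {S : Finset (Finset (Fin n))} (hS : M.IsNested (𝓖 ∪ {univ}) S)
    {c : Finset (Fin n) → ℝ} (hc : ∀ G ∈ S, 0 ≤ c G) (s : ℝ) :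
    M.IsFlat (univ.filter fun x => s < ∑ G ∈ S with x ∈ G, c G) := by
  classical
  rcases lt_or_ge s 0 with hs | hs
  · rw [filter_true_of_mem fun x _ => hs.trans_le (sum_nonneg fun G hG => hc G (mem_filter.1 hG).1)]
    exact isFlat_univ
  · rw [hS.filter_lt_sum_eq_sup hM h𝓖 hc hs, ← sup_filter_maximal_id]
    refine hS.isFlat_sup hM h𝓖 ((filter_subset _ _).trans (filter_subset _ _)) ?_
    rw [coe_filter]
    exact (setOfPred_maximal_antichain _).subset fun G hG => hG.2

theorem inBergmanFan_iff_forall_isFlat {w : Fin n → ℝ} :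
    M.InBergmanFan w ↔ ∀ t : ℝ, M.IsFlat (univ.filter fun x => t < w x) := by
  constructor
  · intro hw t C hC hCt
    obtain ⟨x, hx⟩ := card_eq_one.1 hCt
    obtain ⟨i, hiC, j, hjC, hij, hwij, hmin⟩ := hw C hC
    have hxC : x ∈ C \ univ.filter (t < w ·) := hx ▸ mem_singleton_self x
    simp only [mem_sdiff, mem_filter, mem_univ, true_and, not_lt] at hxC
    have hmem : ∀ y ∈ C, w y ≤ t → y = x := fun y hyC hyt => by
      simpa [hyC, hyt] using (Finset.ext_iff.1 hx y).1
    exact hij ((hmem i hiC ((hmin x hxC.1).trans hxC.2)).trans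
      (hmem j hjC (hwij ▸ (hmin x hxC.1).trans hxC.2)).symm)
  · intro hF C hC
    have hCne : C.Nonempty := nonempty_iff_ne_empty.2 fun h => hC.1 <| by
      obtain ⟨B, hB⟩ := M.bases_nonempty
      exact ⟨B, hB, h ▸ empty_subset B⟩
    obtain ⟨k, hkC, hk⟩ := exists_min_image C w hCne
    by_contra hne
    refine hF (w k) C hC (card_eq_one.2 ⟨k, ?_⟩)
    ext y
    simp only [mem_sdiff, mem_filter, mem_univ, true_and, not_lt, mem_singleton]
    refine ⟨fun ⟨hyC, hyk⟩ => ?_, by rintro rfl; exact ⟨hkC, le_rfl⟩⟩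
    by_contra hyk'
    exact hne ⟨k, hkC, y, hyC, Ne.symm hyk', (hyk.antisymm (hk y hyC)).symm, hk⟩

theorem IsNested.inBergmanFan (hM : M.Loopless) (h𝓖 : M.IsFlatBuilding 𝓖)
    {S : Finset (Finset (Fin n))} (hS : M.IsNested (𝓖 ∪ {univ}) S)
    {c : Finset (Fin n) → ℝ} (hc : ∀ G ∈ S, 0 ≤ c G) (lam : ℝ) :
    M.InBergmanFan fun i => lam + ∑ G ∈ S, c G * indVec G i := by
  classical
  refine inBergmanFan_iff_forall_isFlat.2 fun t => ?_
  convert hS.isFlat_filter_lt_sum hM h𝓖 hc (t - lam) using 2 with x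
  simp [indVec, sum_filter, sub_lt_iff_lt_add']

theorem isNested_biUnion_maximalBelow {𝒞 : Finset (Finset (Fin n))}
    (h𝒞 : IsChain (· ⊆ ·) (𝒞 : Set (Finset (Fin n)))) (hflat : ∀ F ∈ 𝒞, M.IsFlat F)
    (huniv : univ ∉ 𝒞) : M.IsNested (𝓖 ∪ {univ}) (𝒞.biUnion (maximalBelow 𝓖)) := by
  classical
  refine ⟨fun G hG => ?_, fun T hTS hT₂ hanti hY => ?_⟩
  · obtain ⟨F, -, hGF⟩ := mem_biUnion.1 hG
    exact Or.inl (mem_of_mem_maximalBelow hGF)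
  obtain ⟨X₁, hX₁T⟩ := card_pos.1 (by omega : 0 < #T)
  obtain ⟨F, hF𝒞, hX₁F⟩ := mem_biUnion.1 (hTS hX₁T)
  -- The largest flat of the chain with a factor in `T` contains all members of `T`.
  obtain ⟨F₀, hF₀⟩ := exists_maximal (s := 𝒞.filter fun F => ∃ X ∈ T, X ∈ maximalBelow 𝓖 F)
    ⟨F, mem_filter.2 ⟨hF𝒞, X₁, hX₁T, hX₁F⟩⟩
  obtain ⟨hF₀𝒞, X₀, hX₀T, hX₀⟩ := mem_filter.1 hF₀.1
  have hTF₀ : ∀ X ∈ T, X ⊆ F₀ := by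
    intro X hX
    obtain ⟨F, hF𝒞, hXF⟩ := mem_biUnion.1 (hTS hX)
    refine (subset_of_mem_maximalBelow hXF).trans ((h𝒞.total hF𝒞 hF₀𝒞).elim id fun h => ?_)
    exact hF₀.2 (mem_filter.2 ⟨hF𝒞, X, hX, hXF⟩) h
  have hYF₀ : M.closure (T.sup id) ⊆ F₀ :=
    closure_subset_of_isFlat (hflat F₀ hF₀𝒞) (Finset.sup_le hTF₀)
  have hsubY : ∀ X ∈ T, X ⊆ M.closure (T.sup id) := fun X hX =>
    (le_sup (f := id) hX).trans (subset_closure _)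
  obtain ⟨X', hX'T, hX'X₀⟩ := exists_mem_ne hT₂ X₀
  rcases hY with hY | hY
  · obtain ⟨H, hH, hYH⟩ := exists_subset_mem_maximalBelow hY hYF₀
    have hHX₀ : H ⊆ X₀ :=
      (mem_maximalBelow.1 hX₀).2 (mem_maximalBelow.1 hH).1 ((hsubY X₀ hX₀T).trans hYH)
    exact (hanti X' hX'T X₀ hX₀T hX'X₀).1 (((hsubY X' hX'T).trans hYH).trans hHX₀)
  · rw [Set.mem_singleton_iff] at hY
    exact huniv (univ_subset_iff.1 (hY ▸ hYF₀) ▸ hF₀𝒞)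

theorem IsFlatBuilding.sum_mul_indVec_eq (hM : M.Loopless) (h𝓖 : M.IsFlatBuilding 𝓖)
    {ι : Type*} (D : Finset ι) {F : ι → Finset (Fin n)} (hF : ∀ v ∈ D, M.IsFlat (F v))
    (a : ι → ℝ) (j : Fin n) :
    ∑ v ∈ D, a v * indVec (F v) j =
      ∑ G ∈ D.biUnion (fun v => maximalBelow 𝓖 (F v)),
        (∑ v ∈ D with G ∈ maximalBelow 𝓖 (F v), a v) * indVec G j := by
  classical
  simp_rw [sum_mul]
  rw [← sum_comm' (t := fun v => maximalBelow 𝓖 (F v)) fun v G => ?_]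
  · refine sum_congr rfl fun v hv => ?_
    rw [← mul_sum, h𝓖.sum_indVec_maximalBelow hM (hF v hv)]
  · simp only [mem_filter, mem_biUnion]
    exact ⟨fun h => ⟨h, v, h⟩, fun h => h.1⟩

theorem InBergmanFan.exists_isNested (hM : M.Loopless) (h𝓖 : M.IsFlatBuilding 𝓖)
    {w : Fin n → ℝ} (hw : M.InBergmanFan w) :
    ∃ S : Finset (Finset (Fin n)), M.IsNested (𝓖 ∪ {univ}) S ∧
      ∃ (c : Finset (Fin n) → ℝ) (lam : ℝ), (∀ G ∈ S, 0 ≤ c G) ∧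
        w = fun i => lam + ∑ G ∈ S, c G * indVec G i := by
  classical
  obtain ⟨lam, hlam⟩ := exists_forall_sub_eq_sum_nextAbove w
  set D := univ.image w
  set F : ℝ → Finset (Fin n) := fun v => univ.filter (v < w ·)
  have hF v : M.IsFlat (F v) := inBergmanFan_iff_forall_isFlat.1 hw v
  have hchain : IsChain (· ⊆ ·) ((D.image F : Finset _) : Set (Finset (Fin n))) := by
    rw [coe_image]
    rintro _ ⟨v, -, rfl⟩ _ ⟨v', -, rfl⟩ -
    rcases le_total v v' with h | h
    exacts [Or.inr (monotone_filter_right _ fun j _ hj => h.trans_lt hj),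
      Or.inl (monotone_filter_right _ fun j _ hj => h.trans_lt hj)]
  have huniv : univ ∉ D.image F := by
    intro h
    obtain ⟨_, hv, hFv⟩ := mem_image.1 h
    obtain ⟨j, -, rfl⟩ := mem_image.1 hv
    have hj : j ∈ F (w j) := hFv ▸ mem_univ j
    simp [F] at hj
  refine ⟨D.biUnion fun v => maximalBelow 𝓖 (F v), ?_,
    fun G => ∑ v ∈ D with G ∈ maximalBelow 𝓖 (F v), (nextAbove D v - v), lam,
    fun G _ => sum_nonneg fun v _ => sub_nonneg.2 (le_nextAbove D v), funext fun j => ?_⟩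
  · rw [← image_biUnion]
    exact isNested_biUnion_maximalBelow hchain (by simpa using fun v _ => hF v) huniv
  · rw [← h𝓖.sum_mul_indVec_eq hM D (fun v _ => hF v), ← sub_eq_iff_eq_add', hlam, sum_filter]
    simp only [indVec, F, mem_filter, mem_univ, true_and, mul_ite, mul_one, mul_zero]

end FinMatroid

/-- For a loopless matroid `M` and a building set `𝓖` in its lattice
of flats, `w` lies in the Bergman fan iff `w` is a translate (by a multiple of
`(1,…,1)`) of a nonnegative combination of indicator vectors of the members of a set
that is nested with respect to `𝓖 ∪ {[n]}`. -/
theorem statement13 {n r : ℕ} (M : FinMatroid n r) (hM : M.Loopless)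
    (𝓖 : Set (Finset (Fin n))) (h𝓖 : M.IsFlatBuilding 𝓖) (w : Fin n → ℝ) :
    M.InBergmanFan w ↔
      ∃ S : Finset (Finset (Fin n)),
        M.IsNested (𝓖 ∪ {Finset.univ}) S ∧
        ∃ (c : Finset (Fin n) → ℝ) (lam : ℝ),
          (∀ G ∈ S, 0 ≤ c G) ∧
          w = fun i => lam + ∑ G ∈ S, c G * indVec G i := by
  refine ⟨fun hw => hw.exists_isNested hM h𝓖, ?_⟩
  rintro ⟨S, hS, c, lam, hc, rfl⟩
  exact hS.inBergmanFan hM h𝓖 hc lam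
end
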